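/- arXiv:2308.11967 — 10 statements merged into one kernel-verified Lean document; each statement's English description precedes it below -/
import Mathlib

section
/- Let P, Q, R be posets and let f : P → Q and g : P → R be order-reflecting monotone maps whose images are lower sets (sieves) in Q and R respectively. Then the set-theoretic pushout Q +_P R, ordered by: σ₁(x) ≤ σ₁(y) iff x ≤ y; σ₂(x) ≤ σ₂(y) iff x ≤ y; σ₁(x) ≤ σ₂(y) iff there exists z with x = f(z) and g(z) ≤ y; σ₂(x) ≤ σ₁(y) iff there exists z with x = g(z) and f(z) ≤ y, is a partial order, and the inclusion maps σ₁ : Q → Q +_P R and σ₂ : R → Q +_P R are again sieve inclusions (order-reflecting with lower-set image). -/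
open Sum

/-- the pushout of two sieve inclusions of posets, with the order described
explicitly on the set-theoretic pushout, is a partial order, and the two inclusion maps
are again sieve inclusions (monotone, order-reflecting, with lower-set image). -/
theorem sieve_pushout_of_posets
    {P Q R : Type*} [PartialOrder P] [PartialOrder Q] [PartialOrder R]
    (f : P → Q) (g : P → R)
    (hf_mono : Monotone f) (hg_mono : Monotone g)
    (hf_refl : ∀ x y : P, f x ≤ f y → x ≤ y)
    (hg_refl : ∀ x y : P, g x ≤ g y → x ≤ y)
    (hf_sieve : ∀ (q : Q) (p : P), q ≤ f p → ∃ p', q = f p')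
    (hg_sieve : ∀ (r : R) (p : P), r ≤ g p → ∃ p', r = g p') :
    let rel : Q ⊕ R → Q ⊕ R → Prop := fun a b => ∃ z : P, a = inl (f z) ∧ b = inr (g z)
    let σ₁ : Q → Quot rel := fun q => Quot.mk rel (inl q)
    let σ₂ : R → Quot rel := fun r => Quot.mk rel (inr r)
    let le' : Q ⊕ R → Q ⊕ R → Prop := fun a b =>
      match a, b with
      | inl x, inl y => x ≤ y
      | inl x, inr y => ∃ z : P, x = f z ∧ g z ≤ y
      | inr x, inr y => x ≤ y
      | inr x, inl y => ∃ z : P, x = g z ∧ f z ≤ y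
    let le : Quot rel → Quot rel → Prop := fun u v =>
      ∃ a b, u = Quot.mk rel a ∧ v = Quot.mk rel b ∧ le' a b
    -- the order is a partial order:
    (∀ u, le u u) ∧
    (∀ u v w, le u v → le v w → le u w) ∧
    (∀ u v, le u v → le v u → u = v) ∧
    -- σ₁ is a sieve inclusion:
    (∀ x y : Q, x ≤ y → le (σ₁ x) (σ₁ y)) ∧
    (∀ x y : Q, le (σ₁ x) (σ₁ y) → x ≤ y) ∧
    (∀ (u : Quot rel) (y : Q), le u (σ₁ y) → ∃ x : Q, u = σ₁ x) ∧
    -- σ₂ is a sieve inclusion: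
    (∀ x y : R, x ≤ y → le (σ₂ x) (σ₂ y)) ∧
    (∀ x y : R, le (σ₂ x) (σ₂ y) → x ≤ y) ∧
    (∀ (u : Quot rel) (y : R), le u (σ₂ y) → ∃ x : R, u = σ₂ x) := by

  intro rel σ₁ σ₂ le' le
  have hfi : Function.Injective f := fun x y h =>
    le_antisymm (hf_refl _ _ h.le) (hf_refl _ _ h.ge)
  have hgi : Function.Injective g := fun x y h =>
    le_antisymm (hg_refl _ _ h.le) (hg_refl _ _ h.ge)
  -- characterization of equality in the quotient
  have hcl : ∀ a b : Q ⊕ R, Quot.mk rel a = Quot.mk rel b →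
      a = b ∨ (∃ z, a = inl (f z) ∧ b = inr (g z)) ∨
        (∃ z, a = inr (g z) ∧ b = inl (f z)) := by
    intro a b h
    have h' : Relation.EqvGen rel a b := Quot.eq.mp h
    clear h
    induction h' with
    | rel x y hxy => exact Or.inr (Or.inl hxy)
    | refl x => exact Or.inl rfl
    | symm x y _ ih =>
      rcases ih with rfl | ⟨z, hz1, hz2⟩ | ⟨z, hz1, hz2⟩
      · exact Or.inl rfl
      · exact Or.inr (Or.inr ⟨z, hz2, hz1⟩)
      · exact Or.inr (Or.inl ⟨z, hz2, hz1⟩)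
    | trans x y z _ _ ih1 ih2 =>
      rcases ih1 with rfl | ⟨w, hw1, hw2⟩ | ⟨w, hw1, hw2⟩
      · exact ih2
      · rcases ih2 with rfl | ⟨v, hv1, hv2⟩ | ⟨v, hv1, hv2⟩
        · exact Or.inr (Or.inl ⟨w, hw1, hw2⟩)
        · rw [hw2] at hv1; exact absurd hv1 (by simp)
        · rw [hw2] at hv1
          have : g w = g v := by injection hv1
          have : w = v := hgi this
          subst this
          exact Or.inl (hw1.trans hv2.symm)
      · rcases ih2 with rfl | ⟨v, hv1, hv2⟩ | ⟨v, hv1, hv2⟩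
        · exact Or.inr (Or.inr ⟨w, hw1, hw2⟩)
        · rw [hw2] at hv1
          have : f w = f v := by injection hv1
          have : w = v := hfi this
          subst this
          exact Or.inl (hw1.trans hv2.symm)
        · rw [hw2] at hv1; exact absurd hv1 (by simp)
  -- compatibility of le' on the left
  have compat_left : ∀ {a b c : Q ⊕ R}, Quot.mk rel a = Quot.mk rel b →
      le' a c → le' b c := by
    intro a b c h hac
    rcases hcl a b h with rfl | ⟨z, hz1, hz2⟩ | ⟨z, hz1, hz2⟩
    · exact hac
    · subst hz1; subst hz2
      cases c with
      | inl y => exact ⟨z, rfl, hac⟩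
      | inr y =>
        obtain ⟨w, hw1, hw2⟩ := hac
        have : z = w := hfi hw1
        subst this
        exact hw2
    · subst hz1; subst hz2
      cases c with
      | inl y =>
        obtain ⟨w, hw1, hw2⟩ := hac
        have : z = w := hgi hw1
        subst this
        exact hw2
      | inr y => exact ⟨z, rfl, hac⟩
  -- compatibility of le' on the right
  have compat_right : ∀ {a b c : Q ⊕ R}, Quot.mk rel a = Quot.mk rel b →
      le' c a → le' c b := by
    intro a b c h hca
    rcases hcl a b h with rfl | ⟨z, hz1, hz2⟩ | ⟨z, hz1, hz2⟩
    · exact hca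
    · subst hz1; subst hz2
      cases c with
      | inl x =>
        obtain ⟨p', hp'⟩ := hf_sieve x z hca
        subst hp'
        exact ⟨p', rfl, hg_mono (hf_refl _ _ hca)⟩
      | inr x =>
        obtain ⟨w, hw1, hw2⟩ := hca
        subst hw1
        exact hg_mono (hf_refl _ _ hw2)
    · subst hz1; subst hz2
      cases c with
      | inl x =>
        obtain ⟨w, hw1, hw2⟩ := hca
        subst hw1
        exact hf_mono (hg_refl _ _ hw2)
      | inr x =>
        obtain ⟨p', hp'⟩ := hg_sieve x z hca
        subst hp'
        exact ⟨p', rfl, hf_mono (hg_refl _ _ hca)⟩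
  -- reflexivity of le'
  have refl' : ∀ a : Q ⊕ R, le' a a := by
    intro a; cases a with
    | inl x => exact le_refl x
    | inr x => exact le_refl x
  -- transitivity of le'
  have trans' : ∀ a b c : Q ⊕ R, le' a b → le' b c → le' a c := by
    intro a b c hab hbc
    cases a with
    | inl x =>
      cases b with
      | inl y =>
        cases c with
        | inl w => exact le_trans hab hbc
        | inr w =>
          obtain ⟨z, hz1, hz2⟩ := hbc
          subst hz1
          obtain ⟨p', hp'⟩ := hf_sieve x z hab
          subst hp'
          exact ⟨p', rfl, le_trans (hg_mono (hf_refl _ _ hab)) hz2⟩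
      | inr y =>
        obtain ⟨z, hz1, hz2⟩ := hab
        subst hz1
        cases c with
        | inl w =>
          obtain ⟨v, hv1, hv2⟩ := hbc
          subst hv1
          exact le_trans (hf_mono (hg_refl _ _ hz2)) hv2
        | inr w => exact ⟨z, rfl, le_trans hz2 hbc⟩
    | inr x =>
      cases b with
      | inr y =>
        cases c with
        | inr w => exact le_trans hab hbc
        | inl w =>
          obtain ⟨z, hz1, hz2⟩ := hbc
          subst hz1
          obtain ⟨p', hp'⟩ := hg_sieve x z hab
          subst hp'
          exact ⟨p', rfl, le_trans (hf_mono (hg_refl _ _ hab)) hz2⟩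
      | inl y =>
        obtain ⟨z, hz1, hz2⟩ := hab
        subst hz1
        cases c with
        | inr w =>
          obtain ⟨v, hv1, hv2⟩ := hbc
          subst hv1
          exact le_trans (hg_mono (hf_refl _ _ hz2)) hv2
        | inl w => exact ⟨z, rfl, le_trans hz2 hbc⟩
  -- antisymmetry of le' (in the quotient)
  have antisym' : ∀ a b : Q ⊕ R, le' a b → le' b a →
      Quot.mk rel a = Quot.mk rel b := by
    intro a b hab hba
    cases a with
    | inl x =>
      cases b with
      | inl y => rw [le_antisymm hab hba]
      | inr y =>
        obtain ⟨z, hz1, hz2⟩ := hab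
        obtain ⟨w, hw1, hw2⟩ := hba
        subst hz1; subst hw1
        have hzw : z = w := le_antisymm (hg_refl _ _ hz2) (hf_refl _ _ hw2)
        subst hzw
        exact Quot.sound ⟨z, rfl, rfl⟩
    | inr x =>
      cases b with
      | inr y => rw [le_antisymm hab hba]
      | inl y =>
        obtain ⟨z, hz1, hz2⟩ := hab
        obtain ⟨w, hw1, hw2⟩ := hba
        subst hz1; subst hw1
        have hzw : z = w := le_antisymm (hf_refl _ _ hz2) (hg_refl _ _ hw2)
        subst hzw
        exact (Quot.sound ⟨z, rfl, rfl⟩).symm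
  refine ⟨?_, ?_, ?_, ?_, ?_, ?_, ?_, ?_, ?_⟩
  · -- reflexivity
    intro u
    induction u using Quot.ind with
    | _ a => exact ⟨a, a, rfl, rfl, refl' a⟩
  · -- transitivity
    rintro u v w ⟨a, b, hu, hv, hab⟩ ⟨b', c, hv', hw, hbc⟩
    refine ⟨a, c, hu, hw, trans' a b c hab ?_⟩
    exact compat_left (hv'.symm.trans hv) hbc
  · -- antisymmetry
    rintro u v ⟨a, b, hu, hv, hab⟩ ⟨b', a', hv', hu', hba⟩
    rw [hu, hv]
    refine antisym' a b hab ?_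
    have h1 : le' b a' := compat_left (hv'.symm.trans hv) hba
    exact compat_right (hu'.symm.trans hu) h1
  · -- σ₁ monotone
    intro x y h
    exact ⟨inl x, inl y, rfl, rfl, h⟩
  · -- σ₁ order-reflecting
    rintro x y ⟨a, b, hu, hv, hab⟩
    have h1 : le' (inl x) b := compat_left hu.symm hab
    exact compat_right hv.symm h1
  · -- σ₁ sieve
    rintro u y ⟨a, b, hu, hv, hab⟩
    have h1 : le' a (inl y) := compat_right hv.symm hab
    cases a with
    | inl x => exact ⟨x, hu⟩
    | inr x =>
      obtain ⟨z, hz1, hz2⟩ := h1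
      subst hz1
      exact ⟨f z, by rw [hu]; exact (Quot.sound ⟨z, rfl, rfl⟩).symm⟩
  · -- σ₂ monotone
    intro x y h
    exact ⟨inr x, inr y, rfl, rfl, h⟩
  · -- σ₂ order-reflecting
    rintro x y ⟨a, b, hu, hv, hab⟩
    have h1 : le' (inr x) b := compat_left hu.symm hab
    exact compat_right hv.symm h1
  · -- σ₂ sieve
    rintro u y ⟨a, b, hu, hv, hab⟩
    have h1 : le' a (inr y) := compat_right hv.symm hab
    cases a with
    | inr x => exact ⟨x, hu⟩
    | inl x =>
      obtain ⟨z, hz1, hz2⟩ := h1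
      subst hz1
      exact ⟨g z, by rw [hu]; exact Quot.sound ⟨z, rfl, rfl⟩⟩
end

section
/- Let P be a poset and let U and V be lower sets (sieves) of P, each equipped with the induced ordering. Then the commutative square of inclusion functors U∩V → U, U∩V → V, U → U∪V, V → U∪V is a pushout square in the category of small categories (equivalently, in the category of posets and monotone maps). -/
/-!
A cocone under the square is a pair of functors `F` on `U` and `G` on `V` that agree on `U ∩ V`.
Because `U` and `V` are lower sets, an arrow `x ≤ y` of `U ∪ V` lies entirely in `U` when `y ∈ U`
and entirely in `V` otherwise, and a composable pair `x ≤ y ≤ z` lies entirely in the sieve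
containing `z`. So `F` and `G` glue to a functor on `U ∪ V`, and the same covering of arrows makes
the glued functor unique.
-/

open CategoryTheory Limits

universe u u₁ v₁

namespace Set

variable {P : Type u} [Preorder P]

abbrev inclusionFunctor {s t : Set P} (h : s ⊆ t) : s ⥤ t :=
  Monotone.functor (f := inclusion h) fun _ _ hxy => hxy

section Transport

variable {S W : Set P} {C : Type u₁} [Category.{v₁} C] (F : W ⥤ C) {o : S → C}
  (ho : ∀ (x : S) (hx : x.1 ∈ W), o x = F.obj ⟨x, hx⟩)

/-- `F.map` of `x ≤ y`, read between the objects `o x`, `o y`, which equal those of `F` on `W`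
only propositionally. -/
def transportMap {x y : S} (hxy : x ≤ y) (hx : x.1 ∈ W) (hy : y.1 ∈ W) : o x ⟶ o y :=
  eqToHom (ho x hx) ≫ F.map (homOfLE hxy : (⟨x, hx⟩ : W) ⟶ ⟨y, hy⟩) ≫ eqToHom (ho y hy).symm

lemma transportMap_refl {x : S} (hx : x.1 ∈ W) : transportMap F ho le_rfl hx hx = 𝟙 (o x) := by
  simp [transportMap, homOfLE_refl]

lemma transportMap_trans {x y z : S} (hxy : x ≤ y) (hyz : y ≤ z) (hx : x.1 ∈ W) (hy : y.1 ∈ W)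
    (hz : z.1 ∈ W) :
    transportMap F ho (hxy.trans hyz) hx hz =
      transportMap F ho hxy hx hy ≫ transportMap F ho hyz hy hz := by
  simp [transportMap, ← Functor.map_comp_assoc]

end Transport

variable {U V : Set P} (hU : IsLowerSet U) (hV : IsLowerSet V)

section Glue

variable {C : Type u₁} [Category.{v₁} C]
  (F : U ⥤ C) (G : V ⥤ C)
  (hFG : inclusionFunctor inter_subset_left ⋙ F = inclusionFunctor inter_subset_right ⋙ G)

open Classical in
noncomputable def glueObj (x : ↥(U ∪ V)) : C :=
  if hx : x.1 ∈ U then F.obj ⟨x, hx⟩ else G.obj ⟨x, x.2.resolve_left hx⟩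

lemma glueObj_of_mem_left (x : ↥(U ∪ V)) (hx : x.1 ∈ U) : glueObj F G x = F.obj ⟨x, hx⟩ :=
  dif_pos hx

include hFG in
lemma glueObj_of_mem_right (x : ↥(U ∪ V)) (hx : x.1 ∈ V) : glueObj F G x = G.obj ⟨x, hx⟩ := by
  unfold glueObj
  split_ifs with hxU
  · exact Functor.congr_obj hFG ⟨x, hxU, hx⟩
  · rfl

include hFG in
lemma transportMap_left_eq_right {x y : ↥(U ∪ V)} (hxy : x ≤ y) (hxU : x.1 ∈ U) (hyU : y.1 ∈ U)
    (hxV : x.1 ∈ V) (hyV : y.1 ∈ V) :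
    transportMap F (glueObj_of_mem_left F G) hxy hxU hyU =
      transportMap G (glueObj_of_mem_right F G hFG) hxy hxV hyV := by
  have hobj (z : P) (hzU : z ∈ U) (hzV : z ∈ V) : F.obj ⟨z, hzU⟩ = G.obj ⟨z, hzV⟩ :=
    Functor.congr_obj hFG ⟨z, hzU, hzV⟩
  have hmap : F.map (homOfLE hxy : (⟨x, hxU⟩ : U) ⟶ ⟨y, hyU⟩) =
      eqToHom (hobj x hxU hxV) ≫ G.map (homOfLE hxy : (⟨x, hxV⟩ : V) ⟶ ⟨y, hyV⟩) ≫
        eqToHom (hobj y hyU hyV).symm :=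
    Functor.congr_hom hFG (homOfLE hxy : (⟨x, hxU, hxV⟩ : ↥(U ∩ V)) ⟶ ⟨y, hyU, hyV⟩)
  simp [transportMap, hmap]

-- The arrow is taken from the sieve containing its target, which then contains its source too.
open Classical in
noncomputable def glueMap {x y : ↥(U ∪ V)} (hxy : x ≤ y) : glueObj F G x ⟶ glueObj F G y :=
  if hy : y.1 ∈ U then transportMap F (glueObj_of_mem_left F G) hxy (hU hxy hy) hy
  else
    have hy : y.1 ∈ V := y.2.resolve_left hy
    transportMap G (glueObj_of_mem_right F G hFG) hxy (hV hxy hy) hy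

lemma glueMap_of_mem_left {x y : ↥(U ∪ V)} (hxy : x ≤ y) (hy : y.1 ∈ U) :
    glueMap hU hV F G hFG hxy = transportMap F (glueObj_of_mem_left F G) hxy (hU hxy hy) hy :=
  dif_pos hy

lemma glueMap_of_mem_right {x y : ↥(U ∪ V)} (hxy : x ≤ y) (hy : y.1 ∈ V) :
    glueMap hU hV F G hFG hxy =
      transportMap G (glueObj_of_mem_right F G hFG) hxy (hV hxy hy) hy := by
  unfold glueMap
  split_ifs with hyU
  · exact transportMap_left_eq_right F G hFG hxy _ hyU _ hy
  · rfl

noncomputable def glue : ↥(U ∪ V) ⥤ C where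
  obj := glueObj F G
  map f := glueMap hU hV F G hFG f.le
  map_id x := by
    rcases x.2 with hx | hx
    · simpa only [glueMap_of_mem_left hU hV F G hFG le_rfl hx] using transportMap_refl _ _ hx
    · simpa only [glueMap_of_mem_right hU hV F G hFG le_rfl hx] using transportMap_refl _ _ hx
  map_comp {x y z} f g := by
    rcases z.2 with hz | hz
    · have hy := hU g.le hz
      simp only [glueMap_of_mem_left hU hV F G hFG _ hz, glueMap_of_mem_left hU hV F G hFG _ hy]
      exact transportMap_trans _ _ f.le g.le _ hy hz
    · have hy := hV g.le hz
      simp only [glueMap_of_mem_right hU hV F G hFG _ hz, glueMap_of_mem_right hU hV F G hFG _ hy]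
      exact transportMap_trans _ _ f.le g.le _ hy hz

lemma inclusionFunctor_comp_glue_left :
    inclusionFunctor subset_union_left ⋙ glue hU hV F G hFG = F := by
  refine CategoryTheory.Functor.ext (fun x => glueObj_of_mem_left F G _ x.2) fun x y f => ?_
  -- once the branch of `glueMap` is fixed, the two sides agree definitionally
  exact glueMap_of_mem_left hU hV F G hFG
    (x := inclusion subset_union_left x) (y := inclusion subset_union_left y) f.le y.2

lemma inclusionFunctor_comp_glue_right :
    inclusionFunctor subset_union_right ⋙ glue hU hV F G hFG = G := by
  refine CategoryTheory.Functor.ext (fun x => glueObj_of_mem_right F G hFG _ x.2) fun x y f => ?_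
  exact glueMap_of_mem_right hU hV F G hFG
    (x := inclusion subset_union_right x) (y := inclusion subset_union_right y) f.le y.2

end Glue

include hU hV in
lemma union_functor_ext {D : Type u₁} [Category.{v₁} D] {H H' : ↥(U ∪ V) ⥤ D}
    (h₁ : inclusionFunctor subset_union_left ⋙ H = inclusionFunctor subset_union_left ⋙ H')
    (h₂ : inclusionFunctor subset_union_right ⋙ H = inclusionFunctor subset_union_right ⋙ H') :
    H = H' := by
  refine CategoryTheory.Functor.ext (fun x => x.2.elim (fun hx => Functor.congr_obj h₁ ⟨x, hx⟩)
    (fun hx => Functor.congr_obj h₂ ⟨x, hx⟩)) fun x y f => ?_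
  rcases y.2 with hy | hy
  · rw [Subsingleton.elim f ((inclusionFunctor subset_union_left).map
      (homOfLE f.le : (⟨x, hU f.le hy⟩ : U) ⟶ ⟨y, hy⟩))]
    exact Functor.congr_hom h₁ _
  · rw [Subsingleton.elim f ((inclusionFunctor subset_union_right).map
      (homOfLE f.le : (⟨x, hV f.le hy⟩ : V) ⟶ ⟨y, hy⟩))]
    exact Functor.congr_hom h₂ _

include hU hV in
theorem isPushout_inclusionFunctor_of_isLowerSet :
    IsPushout (C := Cat.{u, u})
      (inclusionFunctor (inter_subset_left : U ∩ V ⊆ U)).toCatHom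
      (inclusionFunctor inter_subset_right).toCatHom
      (inclusionFunctor subset_union_left).toCatHom
      (inclusionFunctor subset_union_right).toCatHom := by
  refine IsPushout.of_isColimit' ⟨Cat.ext rfl⟩ (PushoutCocone.IsColimit.mk _
    (fun s => (glue hU hV s.inl.toFunctor s.inr.toFunctor
      (congrArg Cat.Hom.toFunctor s.condition)).toCatHom)
    (fun s => Cat.ext (inclusionFunctor_comp_glue_left ..))
    (fun s => Cat.ext (inclusionFunctor_comp_glue_right ..))
    fun s m h₁ h₂ => Cat.ext (union_functor_ext hU hV ?_ ?_))
  · exact (congrArg Cat.Hom.toFunctor h₁).trans (inclusionFunctor_comp_glue_left ..).symm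
  · exact (congrArg Cat.Hom.toFunctor h₂).trans (inclusionFunctor_comp_glue_right ..).symm

end Set

/-- for sieves (lower sets) U, V of a poset P, the square of inclusion
functors U∩V → U, U∩V → V, U → U∪V, V → U∪V is a pushout in the category Cat of
small categories. -/
theorem sieve_union_isPushout_in_Cat {P : Type} [PartialOrder P]
    (U V : Set P) (hU : IsLowerSet U) (hV : IsLowerSet V) :
    let i₁ : ↥(U ∩ V) ⥤ ↥U :=
      Monotone.functor (f := fun x : ↥(U ∩ V) => (⟨x.1, x.2.1⟩ : ↥U)) (fun _ _ h => h)
    let i₂ : ↥(U ∩ V) ⥤ ↥V :=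
      Monotone.functor (f := fun x : ↥(U ∩ V) => (⟨x.1, x.2.2⟩ : ↥V)) (fun _ _ h => h)
    let j₁ : ↥U ⥤ ↥(U ∪ V) :=
      Monotone.functor (f := fun x : ↥U => (⟨x.1, Or.inl x.2⟩ : ↥(U ∪ V))) (fun _ _ h => h)
    let j₂ : ↥V ⥤ ↥(U ∪ V) :=
      Monotone.functor (f := fun x : ↥V => (⟨x.1, Or.inr x.2⟩ : ↥(U ∪ V))) (fun _ _ h => h)
    IsPushout (C := Cat.{0, 0})
      (show Cat.of ↥(U ∩ V) ⟶ Cat.of ↥U from i₁.toCatHom)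
      (show Cat.of ↥(U ∩ V) ⟶ Cat.of ↥V from i₂.toCatHom)
      (show Cat.of ↥U ⟶ Cat.of ↥(U ∪ V) from j₁.toCatHom)
      (show Cat.of ↥V ⟶ Cat.of ↥(U ∪ V) from j₂.toCatHom) := by
  exact Set.isPushout_inclusionFunctor_of_isLowerSet hU hV
end

section
/- Let 𝔛 be a locally small cocomplete category and let f : A → C, g : A → B, h : B → C be arrows with f = h ∘ g. If g is a compact arrow, then f is compact if and only if h is compact. In particular, compact arrows are closed under composition and satisfy the right cancellation property. -/
open CategoryTheory CategoryTheory.Limits Opposite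

universe v u

namespace CompactArrows

variable {C : Type u} [Category.{v} C]

/-- The cocone on `D ⋙ Hom(X, -)` induced by a cocone on `D`. -/
def homCocone {J : Type v} [SmallCategory J] {D : J ⥤ C} (c : Cocone D) (X : C) :
    Cocone (D ⋙ coyoneda.obj (op X)) where
  pt := X ⟶ c.pt
  ι :=
    { app := fun j => TypeCat.ofHom fun (g : X ⟶ D.obj j) => g ≫ c.ι.app j
      naturality := by
        intro j j' t
        ext g
        simp }

/-- The canonical comparison map `colim_j Hom(X, D_j) ⟶ Hom(X, colim D)`,
relative to a chosen (co)limiting cocone `c` on `D`. -/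
noncomputable def canMap {J : Type v} [SmallCategory J] {D : J ⥤ C} (c : Cocone D) (X : C) :
    colimit (D ⋙ coyoneda.obj (op X)) ⟶ (X ⟶ c.pt) :=
  colimit.desc _ (homCocone c X)

/-- `X` is a compact object: `Hom(X, -)` preserves small filtered colimits. -/
def CompactObj (X : C) : Prop :=
  ∀ (J : Type v) (_ : SmallCategory J) (_ : IsFiltered J) (D : J ⥤ C) (c : Cocone D),
    IsColimit c → IsIso (canMap c X)

/-- `f : A ⟶ B` is a compact arrow: for every small filtered diagram `D` the comparison
square between `colim_j Hom(B, D_j) → Hom(B, colim D)` and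
`colim_j Hom(A, D_j) → Hom(A, colim D)` (via precomposition with `f`) is a pullback of sets. -/
def CompactArrow {A B : C} (f : A ⟶ B) : Prop :=
  ∀ (J : Type v) (_ : SmallCategory J) (_ : IsFiltered J) (D : J ⥤ C) (c : Cocone D),
    IsColimit c →
      IsPullback (canMap c B)
        (colimMap (Functor.whiskerLeft D (coyoneda.map f.op)))
        (TypeCat.ofHom fun (g : B ⟶ c.pt) => f ≫ g)
        (canMap c A)

end CompactArrows

/-! The comparison square of `g ≫ h` is the vertical pasting of the squares of `h` and `g`
(precomposition with `g ≫ h` is precomposition with `h`, then with `g`), so the claim is the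
pasting lemma for pullbacks. -/

namespace CompactArrows

variable {C : Type u} [Category.{v} C]

theorem colimMap_whiskerLeft_coyoneda_map_comp {J : Type v} [SmallCategory J] (D : J ⥤ C)
    {A B Z : C} (g : A ⟶ B) (h : B ⟶ Z) :
    colimMap (Functor.whiskerLeft D (coyoneda.map (g ≫ h).op)) =
      colimMap (Functor.whiskerLeft D (coyoneda.map h.op)) ≫
        colimMap (Functor.whiskerLeft D (coyoneda.map g.op)) := by
  simp only [colimMap_eq, op_comp, Functor.map_comp, Functor.whiskerLeft_comp, colim.map_comp]

theorem canMap_naturality {J : Type v} [SmallCategory J] {D : J ⥤ C} (c : Cocone D)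
    {B Z : C} (h : B ⟶ Z) :
    canMap c Z ≫ TypeCat.ofHom (fun k : Z ⟶ c.pt => h ≫ k) =
      colimMap (Functor.whiskerLeft D (coyoneda.map h.op)) ≫ canMap c B := by
  apply colimit.hom_ext
  intro j
  ext k
  simp [canMap, homCocone]

theorem isPullback_canMap_comp_iff {J : Type v} [SmallCategory J] {D : J ⥤ C} (c : Cocone D)
    {A B Z : C} (g : A ⟶ B) (h : B ⟶ Z)
    (hg : IsPullback (canMap c B) (colimMap (Functor.whiskerLeft D (coyoneda.map g.op)))
      (TypeCat.ofHom fun k : B ⟶ c.pt => g ≫ k) (canMap c A)) :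
    IsPullback (canMap c Z) (colimMap (Functor.whiskerLeft D (coyoneda.map (g ≫ h).op)))
        (TypeCat.ofHom fun k : Z ⟶ c.pt => (g ≫ h) ≫ k) (canMap c A) ↔
      IsPullback (canMap c Z) (colimMap (Functor.whiskerLeft D (coyoneda.map h.op)))
        (TypeCat.ofHom fun k : Z ⟶ c.pt => h ≫ k) (canMap c B) := by
  have hprecomp : (TypeCat.ofHom fun k : Z ⟶ c.pt => (g ≫ h) ≫ k) =
      TypeCat.ofHom (fun k : Z ⟶ c.pt => h ≫ k) ≫ TypeCat.ofHom (fun k : B ⟶ c.pt => g ≫ k) := by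
    ext k
    simp
  rw [colimMap_whiskerLeft_coyoneda_map_comp, hprecomp]
  exact IsPullback.paste_vert_iff hg (canMap_naturality c h)

end CompactArrows

open CompactArrows

theorem compactArrow_comp_iff_cancellation_general
    {C : Type u} [Category.{v} C]
    {A B Z : C} (f : A ⟶ Z) (g : A ⟶ B) (h : B ⟶ Z)
    (hfac : f = g ≫ h) (hg : CompactArrow g) :
    CompactArrow f ↔ CompactArrow h := by
  subst hfac
  exact forall₄_congr fun J _ hJ D => forall₂_congr fun c hc =>
    isPullback_canMap_comp_iff c g h (hg J _ hJ D c hc)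

/-- if `f = h ∘ g` and `g` is a compact arrow, then `f` is compact iff `h`
is compact; in particular compact arrows are closed under composition and have the right
cancellation property. -/
theorem compactArrow_comp_iff_cancellation
    {C : Type u} [Category.{v} C] [HasColimits C]
    {A B Z : C} (f : A ⟶ Z) (g : A ⟶ B) (h : B ⟶ Z)
    (hfac : f = g ≫ h) (hg : CompactArrow g) :
    CompactArrow f ↔ CompactArrow h :=
  compactArrow_comp_iff_cancellation_general f g h hfac hg
end

section
/- Let 𝔛 be a locally small cocomplete category and f : A → B a compact arrow in 𝔛. Then f, viewed as an object of the coslice category A/𝔛, is a compact object, i.e. Hom_{A/𝔛}(f, −) preserves small filtered colimits. -/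
open CategoryTheory CategoryTheory.Limits Opposite

universe v u

open CompactArrows

/-! A morphism `X ⟶ Y` in `A/𝔛` is a morphism `X.right ⟶ Y.right` in the fibre of precomposition
with `X.hom` over `Y.hom`. The forgetful functor `A/𝔛 ⥤ 𝔛` preserves filtered colimits, so the
pullback square expressing compactness of `X.hom` identifies the fibre of
`colim_j Hom(X.right, D_j) → colim_j Hom(A, D_j)` over the class of the structure maps `D_j.hom`
with the fibre of `Hom(X.right, colim D) → Hom(A, colim D)` over `(colim D).hom`, which is
`Hom(X, colim D)`. Because `J` is filtered, the former fibre is `colim_j Hom_{A/𝔛}(X, D_j)`. -/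

namespace CompactArrows

section Coyoneda

variable {J : Type v} [SmallCategory J]

@[simp]
theorem canMap_ι_apply {C : Type u} [Category.{v} C] {D : J ⥤ C} (c : Cocone D) (X : C) (j : J)
    (u : X ⟶ D.obj j) :
    canMap c X (colimit.ι (D ⋙ coyoneda.obj (op X)) j u) = u ≫ c.ι.app j :=
  ConcreteCategory.congr_hom (colimit.ι_desc (homCocone c X) j) u

theorem colimMap_whiskerLeft_coyoneda_ι_apply {C : Type u} [Category.{v} C] (D : J ⥤ C)
    {A B : C} (f : A ⟶ B) {j : J} (u : B ⟶ D.obj j) :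
    colimMap (Functor.whiskerLeft D (coyoneda.map f.op)) (colimit.ι (D ⋙ coyoneda.obj (op B)) j u)
      = colimit.ι (D ⋙ coyoneda.obj (op A)) j (f ≫ u) := by
  simp

theorem ι_coyoneda_eq_of_map_eq [IsFiltered J] {E : Type*} [Category.{v} E] {C : Type u}
    [Category.{v} C] (G : E ⥤ C) [G.Faithful] (D : J ⥤ E) {X : E} {k : J} {u v : X ⟶ D.obj k}
    (h : colimit.ι ((D ⋙ G) ⋙ coyoneda.obj (op (G.obj X))) k (G.map u) =
      colimit.ι ((D ⋙ G) ⋙ coyoneda.obj (op (G.obj X))) k (G.map v)) :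
    colimit.ι (D ⋙ coyoneda.obj (op X)) k u = colimit.ι (D ⋙ coyoneda.obj (op X)) k v := by
  obtain ⟨k', t, s, hts⟩ := (Types.FilteredColimit.colimit_eq_iff _).1 h
  refine (Types.FilteredColimit.colimit_eq_iff _).2 ⟨k', t, s, G.map_injective ?_⟩
  simpa using hts

end Coyoneda

section Under

variable {C : Type u} [Category.{v} C] {J : Type v} [SmallCategory J] {A : C}
  {X : Under A} {D : J ⥤ Under A}

theorem canMap_forget_ι_right (c : Cocone D) {k : J} (u : X ⟶ D.obj k) :
    canMap ((Under.forget A).mapCocone c) X.right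
      (colimit.ι ((D ⋙ Under.forget A) ⋙ coyoneda.obj (op X.right)) k u.right) =
        (u ≫ c.ι.app k).right :=
  canMap_ι_apply ((Under.forget A).mapCocone c) X.right k u.right

theorem canMap_forget_ι_hom (c : Cocone D) (k : J) :
    canMap ((Under.forget A).mapCocone c) A
      (colimit.ι ((D ⋙ Under.forget A) ⋙ coyoneda.obj (op A)) k (D.obj k).hom) = c.pt.hom :=
  (canMap_ι_apply ((Under.forget A).mapCocone c) A k (D.obj k).hom).trans (Under.w (c.ι.app k))

theorem colimMap_forget_ι_right {k : J} (u : X ⟶ D.obj k) :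
    colimMap (Functor.whiskerLeft (D ⋙ Under.forget A) (coyoneda.map X.hom.op))
      (colimit.ι ((D ⋙ Under.forget A) ⋙ coyoneda.obj (op X.right)) k u.right) =
        colimit.ι ((D ⋙ Under.forget A) ⋙ coyoneda.obj (op A)) k (D.obj k).hom :=
  (colimMap_whiskerLeft_coyoneda_ι_apply _ X.hom u.right).trans
    (congrArg (colimit.ι ((D ⋙ Under.forget A) ⋙ coyoneda.obj (op A)) k) (Under.w u))

variable [IsFiltered J]

theorem exists_underHom_of_ι_eq_ι_hom {j j₀ : J} (h : X.right ⟶ (D.obj j).right)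
    (hh : colimit.ι ((D ⋙ Under.forget A) ⋙ coyoneda.obj (op A)) j (X.hom ≫ h) =
      colimit.ι ((D ⋙ Under.forget A) ⋙ coyoneda.obj (op A)) j₀ (D.obj j₀).hom) :
    ∃ (k : J) (t : j ⟶ k) (u : X ⟶ D.obj k), u.right = h ≫ (D.map t).right := by
  obtain ⟨k, t, s, hts⟩ := (Types.FilteredColimit.colimit_eq_iff _).1 hh
  have hts : (X.hom ≫ h) ≫ (D.map t).right = (D.obj j₀).hom ≫ (D.map s).right := hts
  refine ⟨k, t, Under.homMk (h ≫ (D.map t).right) ?_, rfl⟩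
  simpa [Under.w (D.map s)] using hts

theorem CompactArrow.canMap_under_injective (hf : CompactArrow X.hom)
    {c : Cocone D} (hc : IsColimit c) : Function.Injective (canMap c X) := by
  have := IsFiltered.isConnected J
  have hpb := hf J _ ‹_› _ _ (isColimitOfPreserves (Under.forget A) hc)
  intro x y hxy
  obtain ⟨k, u, v, rfl, rfl⟩ :=
    Types.FilteredColimit.jointly_surjective_of_isColimit₂ (colimit.isColimit _) x y
  have huv : u ≫ c.ι.app k = v ≫ c.ι.app k :=
    (canMap_ι_apply c X k u).symm.trans (hxy.trans (canMap_ι_apply c X k v))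
  have hB : colimit.ι ((D ⋙ Under.forget A) ⋙ coyoneda.obj (op X.right)) k u.right =
      colimit.ι ((D ⋙ Under.forget A) ⋙ coyoneda.obj (op X.right)) k v.right :=
    Types.ext_of_isPullback hpb
      ((canMap_forget_ι_right c u).trans
        ((congrArg CommaMorphism.right huv).trans (canMap_forget_ι_right c v).symm))
      ((colimMap_forget_ι_right u).trans (colimMap_forget_ι_right v).symm)
  exact ι_coyoneda_eq_of_map_eq (Under.forget A) D hB

theorem CompactArrow.canMap_under_surjective (hf : CompactArrow X.hom)
    {c : Cocone D} (hc : IsColimit c) : Function.Surjective (canMap c X) := by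
  have := IsFiltered.isConnected J
  have hpb := hf J _ ‹_› _ _ (isColimitOfPreserves (Under.forget A) hc)
  intro g
  let j₀ : J := Classical.arbitrary J
  obtain ⟨p, hp, hpA⟩ := Types.exists_of_isPullback hpb g.right
    (colimit.ι ((D ⋙ Under.forget A) ⋙ coyoneda.obj (op A)) j₀ (D.obj j₀).hom)
    ((Under.w g).trans (canMap_forget_ι_hom c j₀).symm)
  obtain ⟨j, (h : X.right ⟶ (D.obj j).right), rfl⟩ := Types.jointly_surjective' p
  obtain ⟨k, t, u, hu⟩ := exists_underHom_of_ι_eq_ι_hom h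
    ((colimMap_whiskerLeft_coyoneda_ι_apply (D ⋙ Under.forget A) X.hom h).symm.trans hpA)
  refine ⟨colimit.ι (D ⋙ coyoneda.obj (op X)) k u, Under.UnderMorphism.ext ?_⟩
  calc (canMap c X (colimit.ι (D ⋙ coyoneda.obj (op X)) k u)).right
      = u.right ≫ (c.ι.app k).right := congrArg CommaMorphism.right (canMap_ι_apply c X k u)
    _ = h ≫ (c.ι.app j).right := by rw [hu, Category.assoc, ← Under.comp_right, c.w t]
    _ = g.right := (canMap_ι_apply ((Under.forget A).mapCocone c) X.right j h).symm.trans hp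

end Under

theorem CompactArrow.compactObj_under {C : Type u} [Category.{v} C] {A : C} {X : Under A}
    (hf : CompactArrow X.hom) : CompactObj X := by
  intro J _ _ D c hc
  rw [isIso_iff_bijective]
  exact ⟨hf.canMap_under_injective hc, hf.canMap_under_surjective hc⟩

end CompactArrows

theorem compactArrow_compactObj_under_general
    {C : Type u} [Category.{v} C]
    {A B : C} (f : A ⟶ B) (hf : CompactArrow f) :
    CompactObj (C := Under A) (Under.mk f) :=
  CompactArrow.compactObj_under (X := Under.mk f) hf

/-- if `f : A ⟶ B` is a compact arrow of a locally small cocomplete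
category, then `f`, viewed as an object of the coslice category `A/𝔛`, is a compact
object. -/
theorem compactArrow_compactObj_under
    {C : Type u} [Category.{v} C] [HasColimits C]
    {A B : C} (f : A ⟶ B) (hf : CompactArrow f) :
    CompactObj (C := Under A) (Under.mk f) :=
  compactArrow_compactObj_under_general f hf
end

section
/- Let T be a clan. Every full map f : A → B in T-Mod (i.e. every map with the right lifting property with respect to the maps H(p) for display maps p) is a regular epimorphism: f is pointwise surjective and is the coequalizer of its kernel pair in T-Mod. -/
open CategoryTheory CategoryTheory.Limits Opposite

universe u

namespace ClanThy

variable {T : Type u} [SmallCategory T]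

/-- The clan axioms for a class `disp` of "display maps" in a small category `T`
(which is assumed to have a terminal object): pullbacks of display maps along arbitrary
maps exist and are display maps; isomorphisms and composites of display maps are display
maps; terminal projections are display maps. -/
structure IsClan [HasTerminal T] (disp : MorphismProperty T) : Prop where
  pullback_exists :
    ∀ {Γ' Γ Δ : T} (p : Γ' ⟶ Γ) (s : Δ ⟶ Γ), disp p →
      ∃ (Δ' : T) (q : Δ' ⟶ Δ) (s' : Δ' ⟶ Γ') (h : q ≫ s = s' ≫ p),
        disp q ∧ Nonempty (IsLimit (PullbackCone.mk q s' h))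
  iso_mem : ∀ {X Y : T} (e : X ⟶ Y), IsIso e → disp e
  comp_mem : ∀ {X Y Z : T} (p : X ⟶ Y) (q : Y ⟶ Z), disp p → disp q → disp (p ≫ q)
  terminal_mem : ∀ X : T, disp (terminal.from X)

/-- A model of the clan: a functor `T ⥤ Type` preserving the terminal object and
pullbacks of display maps. -/
def IsModel (disp : MorphismProperty T) (A : T ⥤ Type u) : Prop :=
  Nonempty (PreservesLimitsOfShape (Discrete PEmpty.{1}) A) ∧
    ∀ ⦃X Y Z : T⦄ (g : X ⟶ Z) (p : Y ⟶ Z), disp p →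
      Nonempty (PreservesLimit (cospan g p) A)

end ClanThy

/-!
Lifting against `H(Γ ⟶ ⊤)` produces a preimage in `A Γ` of any element of `B Γ`, because `A ⊤` is
inhabited and `B ⊤` is a point. A pointwise surjection of set-valued functors is an epimorphism,
and every epimorphism in `C ⥤ Type` is regular, hence coequalizes its kernel pair.
-/

namespace ClanThy

variable {T : Type u} [SmallCategory T]

noncomputable def IsModel.isTerminalObjTerminal [HasTerminal T] {disp : MorphismProperty T}
    {A : T ⥤ Type u} (hA : IsModel disp A) : IsTerminal (A.obj (⊤_ T)) :=
  have := hA.1.some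
  terminalIsTerminal.isTerminalObj A (⊤_ T)

end ClanThy

namespace CategoryTheory

universe v w t

section LiftingProperty

variable {C : Type w} [Category.{v} C] {A B : C ⥤ Type v} {f : A ⟶ B}

lemma exists_lift_of_hasLiftingProperty_coyoneda_map {Δ Γ : C} (p : Δ ⟶ Γ)
    [HasLiftingProperty (coyoneda.map p.op) f] (a : A.obj Γ) (b : B.obj Δ)
    (hab : f.app Γ a = B.map p b) :
    ∃ a' : A.obj Δ, A.map p a' = a ∧ f.app Δ a' = b := by
  have sq : CommSq (coyonedaEquiv.symm a) (coyoneda.map p.op) f (coyonedaEquiv.symm b) :=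
    ⟨coyonedaEquiv.injective (by
      rwa [coyonedaEquiv_comp, ← coyonedaEquiv_naturality, Equiv.apply_symm_apply,
        Equiv.apply_symm_apply])⟩
  refine ⟨coyonedaEquiv sq.lift, ?_, ?_⟩
  · rw [coyonedaEquiv_naturality, sq.fac_left, Equiv.apply_symm_apply]
  · rw [← coyonedaEquiv_comp, sq.fac_right, Equiv.apply_symm_apply]

lemma surjective_app_of_hasLiftingProperty_coyoneda_map {Δ Γ : C} (p : Δ ⟶ Γ)
    [HasLiftingProperty (coyoneda.map p.op) f] [Nonempty (A.obj Γ)] [Subsingleton (B.obj Γ)] :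
    Function.Surjective (f.app Δ) := fun b ↦
  have ⟨a, _, hab⟩ := exists_lift_of_hasLiftingProperty_coyoneda_map p
    (Classical.arbitrary _) b (Subsingleton.elim _ _)
  ⟨a, hab⟩

end LiftingProperty

variable {C : Type w} [Category.{v} C] {A B : C ⥤ Type t} {f : A ⟶ B}

noncomputable def isColimitCoforkOfSurjectiveApp (hf : ∀ X, Function.Surjective (f.app X)) :
    IsColimit (Cofork.ofπ f pullback.condition) :=
  have (X : C) : Epi (f.app X) := (epi_iff_surjective _).2 (hf X)
  have := NatTrans.epi_of_epi_app f
  have := IsRegularEpiCategory.regularEpiOfEpi f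
  isColimitCoforkOfEffectiveEpi f (PullbackCone.mk _ _ pullback.condition)
    (pullbackIsPullback f f)

end CategoryTheory

open ClanThy

/-- every full map `f : A ⟶ B` of models of a clan (a map with the right
lifting property with respect to all `H(p)` for display maps `p`) is a regular
epimorphism: it is pointwise surjective and is the coequalizer of its kernel pair in the
category of models (the kernel pair being computed pointwise, i.e. in `[T, Type]`). -/
theorem full_is_regular_epi
    {T : Type u} [SmallCategory T] [HasTerminal T]
    (disp : MorphismProperty T) (hclan : IsClan disp)
    {A B : T ⥤ Type u} (hA : IsModel disp A) (hB : IsModel disp B) (f : A ⟶ B)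
    (hfull : ∀ {Δ Γ : T} (p : Δ ⟶ Γ), disp p → HasLiftingProperty (coyoneda.map p.op) f) :
    (∀ Γ : T, Function.Surjective (f.app Γ)) ∧
    (∀ (M : T ⥤ Type u), IsModel disp M → ∀ g : A ⟶ M,
      pullback.fst f f ≫ g = pullback.snd f f ≫ g →
        ∃! h : B ⟶ M, f ≫ h = g) := by
  have := Types.isTerminalEquivUnique _ hA.isTerminalObjTerminal
  have := Types.isTerminalEquivUnique _ hB.isTerminalObjTerminal
  have hsurj (Γ : T) : Function.Surjective (f.app Γ) :=
    have := hfull _ (hclan.terminal_mem Γ)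
    surjective_app_of_hasLiftingProperty_coyoneda_map (terminal.from Γ)
  exact ⟨hsurj, fun M _ g hg ↦
    Cofork.IsColimit.existsUnique (isColimitCoforkOfSurjectiveApp hsurj) g hg⟩
end

section
/- Let T be a clan with the finite-limit clan structure, i.e. every morphism of T is a display map (so T is a small finite-limit category). Then every full map in T-Mod is an isomorphism. -/
open CategoryTheory CategoryTheory.Limits Opposite

universe u

open ClanThy

/-!
By Yoneda, lifting against `coyoneda.map p.op` says that the naturality square of `f` at `p`
is a weak pullback. At `Γ ⟶ ⊤` this makes every `f.app Γ` surjective, since `A` and `B` send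
`⊤` to a point. At the diagonal `Γ ⟶ Γ × Γ` it makes `f.app Γ` injective: two elements with
the same image pair to an element of `A (Γ × Γ)` whose image lies on the diagonal of
`B (Γ × Γ)`, so the pair comes from a single element of `A Γ`, and the two elements agree.
-/

theorem CategoryTheory.Limits.PullbackCone.IsLimit.exists_fst_eq_snd_eq {X Y S : Type u}
    {f : X ⟶ S} {g : Y ⟶ S} {c : PullbackCone f g} (hc : IsLimit c) {x : X} {y : Y}
    (hxy : f x = g y) : ∃ z, c.fst z = x ∧ c.snd z = y :=
  ⟨(equivPullbackObj hc).symm ⟨(x, y), hxy⟩, by simp, by simp⟩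

namespace ClanThy

section Lifting

variable {T : Type u} [SmallCategory T] {A B : T ⥤ Type u} (f : A ⟶ B)

theorem exists_lift_of_hasLiftingProperty_coyoneda_map {Δ Γ : T} (p : Δ ⟶ Γ)
    [HasLiftingProperty (coyoneda.map p.op) f] {a : A.obj Γ} {b : B.obj Δ}
    (hab : f.app Γ a = B.map p b) : ∃ l : A.obj Δ, A.map p l = a ∧ f.app Δ l = b := by
  have sq : CommSq (coyonedaEquiv.symm a) (coyoneda.map p.op) f (coyonedaEquiv.symm b) :=
    ⟨coyonedaEquiv.injective <| by
      rw [coyonedaEquiv_comp, ← coyonedaEquiv_symm_map, Equiv.apply_symm_apply,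
        Equiv.apply_symm_apply, hab]⟩
  refine ⟨coyonedaEquiv sq.lift, ?_, ?_⟩
  · rw [coyonedaEquiv_naturality, sq.fac_left, Equiv.apply_symm_apply]
  · rw [← coyonedaEquiv_comp, sq.fac_right, Equiv.apply_symm_apply]

theorem surjective_app_of_hasLiftingProperty {Γ Z : T} (p : Γ ⟶ Z)
    [HasLiftingProperty (coyoneda.map p.op) f] [Nonempty (A.obj Z)] [Subsingleton (B.obj Z)] :
    Function.Surjective (f.app Γ) := fun b =>
  (exists_lift_of_hasLiftingProperty_coyoneda_map f p (a := Classical.arbitrary _) (b := b)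
    (Subsingleton.elim _ _)).imp fun _ => And.right

theorem injective_app_of_hasLiftingProperty {Γ P : T} {q s : P ⟶ Γ} {δ : Γ ⟶ P}
    (hδq : δ ≫ q = 𝟙 Γ) (hδs : δ ≫ s = 𝟙 Γ) [HasLiftingProperty (coyoneda.map δ.op) f]
    (hA : ∀ x x' : A.obj Γ, ∃ c, A.map q c = x ∧ A.map s c = x')
    (hB : ∀ ⦃c c' : B.obj P⦄, B.map q c = B.map q c' → B.map s c = B.map s c' → c = c') :
    Function.Injective (f.app Γ) := by
  intro x x' hxx'
  obtain ⟨c, rfl, rfl⟩ := hA x x'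
  have hfc : f.app P c = B.map δ (f.app Γ (A.map q c)) := hB
    (by rw [← Functor.map_comp_apply, hδq, Functor.map_id_apply,
      NatTrans.naturality_apply])
    (by rw [← Functor.map_comp_apply, hδs, Functor.map_id_apply, hxx',
      NatTrans.naturality_apply])
  obtain ⟨l, rfl, -⟩ := exists_lift_of_hasLiftingProperty_coyoneda_map f δ hfc
  simp only [← Functor.map_comp_apply, hδq, hδs]

end Lifting

theorem IsModel.nonempty_unique_obj_terminal {T : Type u} [SmallCategory T] [HasTerminal T]
    {disp : MorphismProperty T} {A : T ⥤ Type u} (hA : IsModel disp A) :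
    Nonempty (Unique (A.obj (⊤_ T))) :=
  have := hA.1.some
  ⟨((PreservesTerminal.iso A).trans Types.terminalIso).toEquiv.unique⟩

end ClanThy

/-- if `T` carries the finite-limit clan structure (every morphism is a
display map, so `T` is a small finite-limit category), then every full map of models is
an isomorphism. -/
theorem full_is_iso_of_finiteLimit_clan
    {T : Type u} [SmallCategory T] [HasTerminal T]
    (hclan : IsClan (⊤ : MorphismProperty T))
    {A B : T ⥤ Type u} (hA : IsModel (⊤ : MorphismProperty T) A)
    (hB : IsModel (⊤ : MorphismProperty T) B) (f : A ⟶ B)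
    (hfull : ∀ {Δ Γ : T} (p : Δ ⟶ Γ), HasLiftingProperty (coyoneda.map p.op) f) :
    IsIso f := by
  obtain ⟨_⟩ := hA.nonempty_unique_obj_terminal
  obtain ⟨_⟩ := hB.nonempty_unique_obj_terminal
  suffices ∀ Γ, IsIso (f.app Γ) from NatIso.isIso_of_isIso_app f
  intro Γ
  obtain ⟨P, q, s, hqs, -, ⟨hP⟩⟩ :=
    hclan.pullback_exists (terminal.from Γ) (terminal.from Γ) trivial
  obtain ⟨δ, hδq, hδs⟩ := PullbackCone.IsLimit.lift' hP (𝟙 Γ) (𝟙 Γ) rfl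
  have := (hA.2 (terminal.from Γ) (terminal.from Γ) trivial).some
  have := (hB.2 (terminal.from Γ) (terminal.from Γ) trivial).some
  have hAP := isLimitPullbackConeMapOfIsLimit A hqs hP
  have hBP := isLimitPullbackConeMapOfIsLimit B hqs hP
  rw [isIso_iff_bijective]
  exact ⟨injective_app_of_hasLiftingProperty f hδq hδs
      (fun _ _ => PullbackCone.IsLimit.exists_fst_eq_snd_eq hAP (Subsingleton.elim _ _))
      (fun _ _ => PullbackCone.IsLimit.type_ext hBP),
    surjective_app_of_hasLiftingProperty f (terminal.from Γ)⟩
end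

section
/- In Cat, a functor F : 𝒞 → 𝒟 has the right lifting property with respect to the inclusions 0 → 1, 2 → 𝟚, the functor 2 → 1, and the functor ℙ → 𝟚 collapsing the parallel pair, if and only if F is an isomorphism of categories (fully faithful and bijective on objects). -/
open CategoryTheory CategoryTheory.Limits

namespace CatWfs

/-- The inclusion `0 → 1` of the empty category into the terminal category. -/
def emptyToPt : Cat.of (Discrete PEmpty) ⟶ Cat.of (Discrete PUnit) :=
  Functor.toCatHom (Functor.empty (Discrete PUnit))

/-- The inclusion `2 → 𝟚` of the discrete two-object category into the interval
category (`Bool` with its usual order `false < true`). -/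
noncomputable def twoToInterval : Cat.of (Discrete Bool) ⟶ Cat.of Bool :=
  Functor.toCatHom (Discrete.functor (fun b => b))

/-- The functor `2 → 1` collapsing the discrete two-object category. -/
def twoToPt : Cat.of (Discrete Bool) ⟶ Cat.of (Discrete PUnit) :=
  Functor.toCatHom (Functor.star (Discrete Bool))

/-- The functor `ℙ → 𝟚` from the parallel-pair category to the interval category
sending both nonidentity arrows to the unique nonidentity arrow. -/
noncomputable def parallelPairToInterval : Cat.of WalkingParallelPair ⟶ Cat.of Bool :=
  Functor.toCatHom <| show WalkingParallelPair ⥤ Bool from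
    parallelPair (homOfLE (by decide : (false : Bool) ≤ true))
      (homOfLE (by decide : (false : Bool) ≤ true))

end CatWfs

open CatWfs

/-!
Each of the four generating maps tests one property of `F` by lifting against it: `0 → 1`
(surjectivity on objects), `2 → 1` (injectivity on objects), `2 → 𝟚` (fullness) and `ℙ → 𝟚`
(faithfulness: a lift sends both parallel arrows to the image of the one arrow of `𝟚`). Conversely,
a fully faithful functor that is bijective on objects has a strict inverse, so it is an isomorphism
in `Cat` and has the right lifting property against every map.
-/

universe v u

namespace CategoryTheory.Functor

section

variable {B C D : Type*} [Category B] [Category C] [Category D] (F : C ⥤ D)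

theorem heq_of_map_heq [F.Faithful] {a b a' b' : C} (ha : a = a') (hb : b = b') {f : a ⟶ b}
    {g : a' ⟶ b'} (h : F.map f ≍ F.map g) : f ≍ g := by
  subst ha hb
  exact heq_of_eq (F.map_injective (eq_of_heq h))

theorem eq_of_comp_eq_comp [F.Faithful] (hF : Function.Injective F.obj) {H K : B ⥤ C}
    (h : H ⋙ F = K ⋙ F) : H = K :=
  Functor.hext (fun b => hF (congr_obj h b))
    (fun _ _ f => F.heq_of_map_heq (hF (congr_obj h _)) (hF (congr_obj h _)) (hcongr_hom h f))

variable [F.Full] [F.Faithful]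

noncomputable def surjInv (hF : Function.Surjective F.obj) : D ⥤ C where
  obj := Function.surjInv hF
  map {d₀ d₁} φ := F.preimage <|
    eqToHom (Function.surjInv_eq hF d₀) ≫ φ ≫ eqToHom (Function.surjInv_eq hF d₁).symm
  map_id d := F.map_injective (by simp)
  map_comp φ ψ := F.map_injective (by simp)

theorem surjInv_comp (hF : Function.Surjective F.obj) : F.surjInv hF ⋙ F = 𝟭 D :=
  Functor.ext (Function.surjInv_eq hF) (fun d₀ d₁ φ => by simp [surjInv])

theorem comp_surjInv (hF : Function.Bijective F.obj) : F ⋙ F.surjInv hF.surjective = 𝟭 C :=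
  F.eq_of_comp_eq_comp hF.injective (by rw [Functor.assoc, surjInv_comp]; rfl)

end

theorem isIso_toCatHom_of_bijective_obj {C D : Type u} [Category.{v} C] [Category.{v} D]
    (F : C ⥤ D) [F.Full] [F.Faithful] (hF : Function.Bijective F.obj) : IsIso F.toCatHom :=
  ⟨(F.surjInv hF.surjective).toCatHom, Cat.ext (F.comp_surjInv hF),
    Cat.ext (F.surjInv_comp hF.surjective)⟩

theorem exists_lift_of_hasLiftingProperty_toCatHom {A B X Y : Type u} [Category.{v} A]
    [Category.{v} B] [Category.{v} X] [Category.{v} Y] {i : A ⥤ B} {p : X ⥤ Y}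
    (h : HasLiftingProperty i.toCatHom p.toCatHom) (f : A ⥤ X) (g : B ⥤ Y) (w : f ⋙ p = i ⋙ g) :
    ∃ l : B ⥤ X, i ⋙ l = f ∧ l ⋙ p = g := by
  have sq : CommSq f.toCatHom i.toCatHom p.toCatHom g.toCatHom := ⟨Cat.ext w⟩
  exact ⟨sq.lift.toFunctor, congrArg Cat.Hom.toFunctor sq.fac_left,
    congrArg Cat.Hom.toFunctor sq.fac_right⟩

end CategoryTheory.Functor

namespace CatWfs

noncomputable def intervalFunctor {D : Type*} [Category D] {X₀ X₁ : D} (φ : X₀ ⟶ X₁) :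
    Bool ⥤ D where
  obj b := cond b X₁ X₀
  map {a b} h :=
    match a, b, h with
    | false, false, _ => 𝟙 X₀
    | false, true, _ => φ
    | true, true, _ => 𝟙 X₁
    | true, false, h => absurd (leOfHom h) (by decide)
  map_id b := by cases b <;> rfl
  map_comp {a b c} f g := by
    cases a <;> cases b <;> cases c <;>
      first
      | exact absurd (leOfHom f) (by decide)
      | exact absurd (leOfHom g) (by decide)
      | simp

section intervalFunctor

variable {D : Type*} [Category D] {X₀ X₁ : D} (φ : X₀ ⟶ X₁)

@[simp]
theorem intervalFunctor_obj_false : (intervalFunctor φ).obj false = X₀ := rfl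

@[simp]
theorem intervalFunctor_obj_true : (intervalFunctor φ).obj true = X₁ := rfl

@[simp]
theorem intervalFunctor_map_false_true (h : false ⟶ true) : (intervalFunctor φ).map h = φ := rfl

end intervalFunctor

variable {C D : Type} [SmallCategory C] [SmallCategory D] (F : C ⥤ D)

theorem surjective_obj_of_hasLiftingProperty_emptyToPt
    (h : HasLiftingProperty emptyToPt (F.toCatHom : Cat.of C ⟶ Cat.of D)) :
    Function.Surjective F.obj := by
  intro d
  obtain ⟨l, -, hl⟩ := Functor.exists_lift_of_hasLiftingProperty_toCatHom h
    (Functor.empty C) ((Functor.const _).obj d) (Functor.empty_ext' _ _)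
  exact ⟨l.obj ⟨⟨⟩⟩, Functor.congr_obj hl ⟨⟨⟩⟩⟩

theorem injective_obj_of_hasLiftingProperty_twoToPt
    (h : HasLiftingProperty twoToPt (F.toCatHom : Cat.of C ⟶ Cat.of D)) :
    Function.Injective F.obj := by
  intro c₀ c₁ hc
  obtain ⟨l, hl, -⟩ := Functor.exists_lift_of_hasLiftingProperty_toCatHom h
    (Discrete.functor fun b => cond b c₁ c₀) ((Functor.const _).obj (F.obj c₀))
    (Discrete.functor_ext fun b => by cases b; exacts [rfl, hc.symm])
  exact (Functor.congr_obj hl ⟨false⟩).symm.trans (Functor.congr_obj hl ⟨true⟩)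

theorem full_of_hasLiftingProperty_twoToInterval
    (h : HasLiftingProperty twoToInterval (F.toCatHom : Cat.of C ⟶ Cat.of D)) : F.Full := by
  refine ⟨fun {c₀ c₁} φ => ?_⟩
  obtain ⟨l, hl, hlF⟩ := Functor.exists_lift_of_hasLiftingProperty_toCatHom h
    (Discrete.functor fun b => cond b c₁ c₀) (intervalFunctor φ)
    (Discrete.functor_ext fun b => by cases b <;> rfl)
  obtain rfl : l.obj false = c₀ := Functor.congr_obj hl ⟨false⟩
  obtain rfl : l.obj true = c₁ := Functor.congr_obj hl ⟨true⟩
  exact ⟨_, eq_of_heq (Functor.hcongr_hom hlF (homOfLE (Bool.false_le true)))⟩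

theorem faithful_of_hasLiftingProperty_parallelPairToInterval
    (h : HasLiftingProperty parallelPairToInterval (F.toCatHom : Cat.of C ⟶ Cat.of D)) :
    F.Faithful := by
  refine ⟨fun {c₀ c₁ f g} hfg => ?_⟩
  obtain ⟨l, hl, -⟩ := Functor.exists_lift_of_hasLiftingProperty_toCatHom h
    (parallelPair f g) (intervalFunctor (F.map f)) (by
      fapply CategoryTheory.Functor.ext
      · rintro (_ | _) <;> rfl
      · rintro X Y (_ | _ | _) <;> simp [hfg])
  exact eq_of_heq ((Functor.hcongr_hom hl .left).symm.trans (Functor.hcongr_hom hl .right))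

end CatWfs

/-- a functor between small categories has the right lifting property with
respect to `0 → 1`, `2 → 𝟚`, `2 → 1` and `ℙ → 𝟚` iff it is an isomorphism of
categories (fully faithful and bijective on objects). -/
theorem rlp_iff_isomorphism_of_categories
    {C D : Type} [SmallCategory C] [SmallCategory D] (F : C ⥤ D) :
    (HasLiftingProperty emptyToPt (show Cat.of C ⟶ Cat.of D from F.toCatHom) ∧
     HasLiftingProperty twoToInterval (show Cat.of C ⟶ Cat.of D from F.toCatHom) ∧
     HasLiftingProperty twoToPt (show Cat.of C ⟶ Cat.of D from F.toCatHom) ∧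
     HasLiftingProperty parallelPairToInterval (show Cat.of C ⟶ Cat.of D from F.toCatHom)) ↔
    (F.Full ∧ F.Faithful ∧ Function.Bijective F.obj) := by
  constructor
  · rintro ⟨hSurj, hFull, hInj, hFaithful⟩
    exact ⟨full_of_hasLiftingProperty_twoToInterval F hFull,
      faithful_of_hasLiftingProperty_parallelPairToInterval F hFaithful,
      injective_obj_of_hasLiftingProperty_twoToPt F hInj,
      surjective_obj_of_hasLiftingProperty_emptyToPt F hSurj⟩
  · rintro ⟨_, _, hF⟩
    have := F.isIso_toCatHom_of_bijective_obj hF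
    exact ⟨inferInstance, inferInstance, inferInstance, inferInstance⟩
end

section
/- Every retract of a category free on a (finite) graph is itself free on a graph. More precisely: let G be a graph, G* the free category on G, and suppose 𝒟 is a category admitting functors K : 𝒟 → G* and F' : G* → 𝒟 with F' ∘ K = id_𝒟. Let H be the graph whose edges are the irreducible arrows of 𝒟 (nonidentity arrows f such that in any factorization f = g h, either g or h is an identity). Then the canonical functor H* → 𝒟 is an isomorphism. -/
open CategoryTheory

universe v u w

namespace FreeRetract

variable {D : Type u} [Category.{v} D]

/-- An arrow is "an identity" (up to the strict equality of its endpoints). -/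
def IsIdentityArrow {X Z : D} (h : X ⟶ Z) : Prop :=
  ∃ e : X = Z, h = eqToHom e

/-- An arrow is irreducible if it is not an identity and in any factorization one of the
two factors is an identity. -/
def Irreducible {X Y : D} (f : X ⟶ Y) : Prop :=
  ¬ IsIdentityArrow f ∧
    ∀ (Z : D) (h : X ⟶ Z) (g : Z ⟶ Y), f = h ≫ g → IsIdentityArrow h ∨ IsIdentityArrow g

/-- The graph (quiver) of irreducible arrows of a category `D`, on the objects of `D`. -/
def IrrGraph (D : Type u) [Category.{v} D] : Type u := D

instance : Quiver.{v} (IrrGraph D) where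
  Hom X Y := { f : (show D from X) ⟶ (show D from Y) // Irreducible f }

/-- The canonical prefunctor from the graph of irreducible arrows into `D`. -/
def irrPrefunctor (D : Type u) [Category.{v} D] : Prefunctor.{v, v} (IrrGraph D) D where
  obj X := X
  map f := f.1

end FreeRetract

open FreeRetract

/-!
Write `ℓ f` for the length of the path `K f`. It is additive, and since `K ⋙ F' = 𝟭 D` it
vanishes only on identities; so induction on `ℓ` factors every arrow into irreducibles.
For uniqueness, suppose `P ≫ a = Q ≫ b` with `a`, `b` irreducible and `ℓ a ≤ ℓ b`. Paths in `G*`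
are equidivisible, so `K b = t ≫ K a` and `K P = K Q ≫ t` for some path `t`. Applying `F'` gives
`b = F' t ≫ a` and `P = Q ≫ F' t` (up to the identifications `F' (K X) = X`), and irreducibility
of `b` makes `F' t` an identity. Hence the last factors agree, and we conclude by induction.
-/

namespace Quiver.Path

variable {V : Type*} [Quiver V]

theorem exists_eq_comp_of_comp_eq_comp_of_length_le {a d : V} :
    ∀ {b : V} (q : Path b d) {c : V} (q' : Path c d), q.length ≤ q'.length →
      ∀ (p : Path a b) (p' : Path a c), p.comp q = p'.comp q' →
        ∃ t : Path c b, q' = t.comp q ∧ p = p'.comp t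
  | _, .nil, _, q', _, _, _, h => ⟨q', q'.comp_nil.symm, by simpa using h⟩
  | _, .cons _ _, _, .nil, hlen, _, _, _ => by simp at hlen
  | _, .cons q e, _, .cons q' e', hlen, p, p', h => by
    rw [comp_cons, comp_cons, cons.injEq] at h
    obtain ⟨rfl, hq, he⟩ := h
    obtain rfl := eq_of_heq he
    obtain ⟨t, rfl, rfl⟩ := exists_eq_comp_of_comp_eq_comp_of_length_le q q'
      (by simpa using hlen) p p' (eq_of_heq hq)
    exact ⟨t, by simp, rfl⟩

theorem exists_eq_eqToHom_of_length_eq_zero {X Y : Paths V} (p : X ⟶ Y) (hp : p.length = 0) :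
    ∃ e : X = Y, p = eqToHom e := by
  obtain rfl := eq_of_length_zero (V := V) p hp
  exact ⟨rfl, eq_nil_of_length_zero (V := V) p hp⟩

end Quiver.Path

namespace FreeRetract

variable {G : Type w} [Quiver.{v} G] {D : Type u} [Category.{v} D]

theorem length_map_comp (K : D ⥤ Paths G) {X Y Z : D} (f : X ⟶ Y) (g : Y ⟶ Z) :
    (K.map (f ≫ g)).length = (K.map f).length + (K.map g).length := by
  rw [K.map_comp]
  exact Quiver.Path.length_comp _ _

section Retract

variable {K : D ⥤ Paths G} {F' : Paths G ⥤ D}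

def retractMap (hretr : K ⋙ F' = 𝟭 D) {X Y : D} (t : K.obj X ⟶ K.obj Y) : X ⟶ Y :=
  eqToHom (Functor.congr_obj hretr X).symm ≫ F'.map t ≫ eqToHom (Functor.congr_obj hretr Y)

variable (hretr : K ⋙ F' = 𝟭 D)
include hretr

theorem retractMap_map {X Y : D} (f : X ⟶ Y) : retractMap hretr (K.map f) = f := by
  simp [retractMap, ← Functor.comp_map, Functor.congr_hom hretr f]

theorem retractMap_comp {X Y Z : D} (t : K.obj X ⟶ K.obj Y) (t' : K.obj Y ⟶ K.obj Z) :
    retractMap hretr (t ≫ t') = retractMap hretr t ≫ retractMap hretr t' := by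
  simp [retractMap]

theorem isIdentityArrow_retractMap_eqToHom {X Y : D} (e : K.obj X = K.obj Y) :
    IsIdentityArrow (retractMap hretr (eqToHom e)) :=
  ⟨(Functor.congr_obj hretr X).symm.trans
      ((congrArg F'.obj e).trans (Functor.congr_obj hretr Y)),
    by simp [retractMap, eqToHom_map]⟩

theorem length_map_pos {X Y : D} {f : X ⟶ Y} (hf : ¬ IsIdentityArrow f) :
    0 < (K.map f).length := by
  by_contra! h
  obtain ⟨e, he⟩ := Quiver.Path.exists_eq_eqToHom_of_length_eq_zero (K.map f) (by omega)
  exact hf (retractMap_map hretr f ▸ he ▸ isIdentityArrow_retractMap_eqToHom hretr e)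

theorem exists_eqToHom_of_comp_eq_comp_of_length_le {X U V Y : D} {P : X ⟶ U} {a : U ⟶ Y}
    {Q : X ⟶ V} {b : V ⟶ Y} (ha : Irreducible a) (hb : Irreducible b) (h : P ≫ a = Q ≫ b)
    (hlen : (K.map a).length ≤ (K.map b).length) :
    ∃ e : V = U, b = eqToHom e ≫ a ∧ P = Q ≫ eqToHom e := by
  obtain ⟨t, hb', hP⟩ := Quiver.Path.exists_eq_comp_of_comp_eq_comp_of_length_le
    (K.map a) (K.map b) hlen (K.map P) (K.map Q)
    ((K.map_comp P a).symm.trans ((congrArg K.map h).trans (K.map_comp Q b)))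
  have hbT : b = retractMap hretr t ≫ a := by
    rw [← retractMap_map hretr b, ← retractMap_map hretr a, ← retractMap_comp]
    exact congrArg _ hb'
  have hPT : P = Q ≫ retractMap hretr t := by
    rw [← retractMap_map hretr P, ← retractMap_map hretr Q, ← retractMap_comp]
    exact congrArg _ hP
  obtain ⟨e, he⟩ := (hb.2 U _ a hbT).resolve_right ha.1
  exact ⟨e, he ▸ hbT, he ▸ hPT⟩

theorem exists_eqToHom_of_comp_eq_comp {X U V Y : D} {P : X ⟶ U} {a : U ⟶ Y}
    {Q : X ⟶ V} {b : V ⟶ Y} (ha : Irreducible a) (hb : Irreducible b) (h : P ≫ a = Q ≫ b) :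
    ∃ e : V = U, b = eqToHom e ≫ a ∧ P = Q ≫ eqToHom e := by
  rcases le_total (K.map a).length (K.map b).length with hle | hle
  · exact exists_eqToHom_of_comp_eq_comp_of_length_le hretr ha hb h hle
  · obtain ⟨rfl, hab, hQP⟩ :=
      exists_eqToHom_of_comp_eq_comp_of_length_le hretr hb ha h.symm hle
    exact ⟨rfl, by simpa using hab.symm, by simpa using hQP.symm⟩

theorem comp_irreducible_ne_id {X Y : D} (f : X ⟶ Y) {g : Y ⟶ X} (hg : Irreducible g) :
    f ≫ g ≠ 𝟙 X := by
  intro h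
  have hid : (K.map (f ≫ g)).length = 0 := by
    rw [h, K.map_id]
    rfl
  have := length_map_pos hretr hg.1
  rw [length_map_comp] at hid
  omega

theorem exists_comp_eq_of_not_irreducible {X Y : D} {f : X ⟶ Y} (hid : ¬ IsIdentityArrow f)
    (hirr : ¬ Irreducible f) :
    ∃ (Z : D) (g : X ⟶ Z) (h : Z ⟶ Y), f = g ≫ h ∧
      (K.map g).length < (K.map f).length ∧ (K.map h).length < (K.map f).length := by
  obtain ⟨Z, g, h, rfl, hg, hh⟩ : ∃ (Z : D) (g : X ⟶ Z) (h : Z ⟶ Y),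
      f = g ≫ h ∧ ¬ IsIdentityArrow g ∧ ¬ IsIdentityArrow h := by
    simpa [Irreducible, hid] using hirr
  have := length_map_pos hretr hg
  have := length_map_pos hretr hh
  exact ⟨Z, g, h, rfl, by rw [length_map_comp]; omega, by rw [length_map_comp]; omega⟩

theorem exists_map_lift_eq {X Y : D} (f : X ⟶ Y) :
    ∃ p : (show Paths (IrrGraph D) from X) ⟶ (show Paths (IrrGraph D) from Y),
      (Paths.lift (irrPrefunctor D)).map p = f := by
  by_cases hid : IsIdentityArrow f
  · obtain ⟨rfl, rfl⟩ := hid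
    exact ⟨𝟙 _, rfl⟩
  by_cases hirr : Irreducible f
  · exact ⟨Quiver.Hom.toPath (V := IrrGraph D) ⟨f, hirr⟩, Category.id_comp f⟩
  obtain ⟨Z, g, h, hf, hg, hh⟩ := exists_comp_eq_of_not_irreducible hretr hid hirr
  obtain ⟨p, hp⟩ := exists_map_lift_eq g
  obtain ⟨q, hq⟩ := exists_map_lift_eq h
  exact ⟨p ≫ q, hf ▸ hp ▸ hq ▸ Functor.map_comp _ p q⟩
termination_by (K.map f).length

theorem map_lift_injective : ∀ {X Y : IrrGraph D} (p q : Quiver.Path X Y),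
    (Paths.lift (irrPrefunctor D)).map p = (Paths.lift (irrPrefunctor D)).map q → p = q
  | _, _, .nil, .nil, _ => rfl
  | _, _, .nil, .cons q b, h => (comp_irreducible_ne_id hretr _ b.2 h.symm).elim
  | _, _, .cons p a, .nil, h => (comp_irreducible_ne_id hretr _ a.2 h).elim
  | _, _, .cons (b := U) p a, .cons (b := V) q b, h => by
    obtain ⟨e, hba, hpq⟩ := exists_eqToHom_of_comp_eq_comp hretr
      (a := (irrPrefunctor D).map a) (b := (irrPrefunctor D).map b) a.2 b.2 h
    obtain rfl : V = U := e
    obtain rfl : b = a := Subtype.ext (hba.trans (Category.id_comp _))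
    rw [map_lift_injective p q (hpq.trans (Category.comp_id _))]

end Retract

end FreeRetract

/-- if `𝒟` is a retract of the free category `G*` on a graph `G` (i.e.
there are functors `K : 𝒟 ⥤ G*` and `F' : G* ⥤ 𝒟` with `K ⋙ F' = 𝟭 𝒟`), then the
canonical functor from the free category on the graph `H` of irreducible arrows of `𝒟`
to `𝒟` is an isomorphism of categories (fully faithful and bijective on objects). -/
theorem retract_of_free_category_is_free
    {G : Type w} [Quiver.{v} G] {D : Type u} [Category.{v} D]
    (K : D ⥤ Paths G) (F' : Paths G ⥤ D) (hretr : K ⋙ F' = 𝟭 D) :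
    (Paths.lift (irrPrefunctor D)).Full ∧
    (Paths.lift (irrPrefunctor D)).Faithful ∧
    Function.Bijective (Paths.lift (irrPrefunctor D)).obj :=
  ⟨⟨exists_map_lift_eq hretr⟩, ⟨map_lift_injective hretr _ _⟩, Function.bijective_id⟩
end

section
/- The Lawvere theory of distributive lattices is not Cauchy complete: there exists a finitely generated free distributive lattice with a non-free retract. Concretely, the section–retraction pair of monotone maps s : {0<1<2} ⇄ {0<1}² : r (with r ∘ s = id) induces, by applying the contravariant functor Pos(−, {0<1}) from posets to distributive lattices, a retraction exhibiting the distributive lattice Pos({0<1<2}, {0<1}) (a 4-element chain) as a retract of the free distributive lattice on two generators Pos({0<1}², {0<1}); and this 4-element chain is not a free distributive lattice. -/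
namespace DLat

/-- `L` is the free (bounded) distributive lattice on the family of generators `ι : S → L`:
every map from `S` to a bounded distributive lattice extends uniquely to a bounded
lattice homomorphism. -/
def IsFreeDistribLattice (L : Type) [DistribLattice L] [BoundedOrder L]
    {S : Type} (ι : S → L) : Prop :=
  ∀ (M : Type) (_ : DistribLattice M) (_ : BoundedOrder M) (f : S → M),
    ∃! g : BoundedLatticeHom L M, ∀ s : S, g (ι s) = f s

end DLat

open DLat

/-! ### Auxiliary definitions and lemmas -/

/-- Pullback of upper sets along a monotone map, as a bounded lattice homomorphism. -/
def UpperSetComapHom {α β : Type} [Preorder α] [Preorder β] (f : α →o β) :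
    BoundedLatticeHom (UpperSet β) (UpperSet α) where
  toFun U := ⟨f ⁻¹' U, U.upper.preimage f.monotone⟩
  map_sup' U V := SetLike.ext fun x => by simp [UpperSet.mem_sup_iff]
  map_inf' U V := SetLike.ext fun x => by simp [UpperSet.mem_inf_iff]
  map_top' := SetLike.ext fun x => by simp [UpperSet.coe_top]
  map_bot' := SetLike.ext fun x => by simp [UpperSet.coe_bot]

@[simp] lemma mem_UpperSetComapHom {α β : Type} [Preorder α] [Preorder β] (f : α →o β)
    (U : UpperSet β) (x : α) : x ∈ UpperSetComapHom f U ↔ f x ∈ U := Iff.rfl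

open Classical in
/-- The co-evaluation homomorphism at a point: `U ↦ (k ∉ U)`. -/
noncomputable def coev (k : Fin 3) : BoundedLatticeHom (UpperSet (Fin 3)) Bool where
  toFun U := if k ∈ U then false else true
  map_sup' U V := by
    by_cases h1 : k ∈ U <;> by_cases h2 : k ∈ V <;>
      simp [UpperSet.mem_sup_iff, h1, h2]
  map_inf' U V := by
    by_cases h1 : k ∈ U <;> by_cases h2 : k ∈ V <;>
      simp [UpperSet.mem_inf_iff, h1, h2]
  map_top' := by simp [UpperSet.notMem_top]
  map_bot' := by simp [UpperSet.mem_bot]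

open Classical in
lemma coev_apply (k : Fin 3) (U : UpperSet (Fin 3)) :
    coev k U = if k ∈ U then false else true := rfl

lemma coev_Ici (k j : Fin 3) : coev k (UpperSet.Ici j) = if j ≤ k then false else true := by
  rw [coev_apply]
  by_cases h : j ≤ k
  · rw [if_pos (UpperSet.mem_Ici_iff.mpr h), if_pos h]
  · rw [if_neg (fun hm => h (UpperSet.mem_Ici_iff.mp hm)), if_neg h]

/-- Classification of the four upper sets of the chain `Fin 3`. -/
lemma classify3 (U : UpperSet (Fin 3)) :
    U = ⊥ ∨ U = UpperSet.Ici 1 ∨ U = UpperSet.Ici 2 ∨ U = ⊤ := by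
  have up : ∀ p q : Fin 3, p ≤ q → p ∈ U → q ∈ U := fun p q h hp => U.upper h hp
  by_cases h0 : (0 : Fin 3) ∈ U
  · refine Or.inl (SetLike.ext fun x => ?_)
    simp only [UpperSet.mem_bot, iff_true]
    exact up 0 x (by omega) h0
  by_cases h1 : (1 : Fin 3) ∈ U
  · refine Or.inr (Or.inl (SetLike.ext fun x => ?_))
    rw [UpperSet.mem_Ici_iff]
    fin_cases x
    · simpa using h0
    · simp [h1]
    · simpa using up 1 2 (by omega) h1
  by_cases h2 : (2 : Fin 3) ∈ U
  · refine Or.inr (Or.inr (Or.inl (SetLike.ext fun x => ?_)))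
    rw [UpperSet.mem_Ici_iff]
    fin_cases x
    · simpa using h0
    · simpa using h1
    · simp [h2]
  · refine Or.inr (Or.inr (Or.inr (SetLike.ext fun x => ?_)))
    exact iff_of_false (by fin_cases x <;> assumption) UpperSet.notMem_top

local notation "AA" => UpperSet.Ici ((true, false) : Bool × Bool)
local notation "BB" => UpperSet.Ici ((false, true) : Bool × Bool)

/-- Classification of the six upper sets of the square `Bool × Bool`. -/
lemma classify4 (U : UpperSet (Bool × Bool)) :
    U = ⊥ ∨ U = AA ∨ U = BB ∨ U = AA ⊔ BB ∨ U = AA ⊓ BB ∨ U = ⊤ := by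
  have up : ∀ p q : Bool × Bool, p ≤ q → p ∈ U → q ∈ U := fun p q h hp => U.upper h hp
  by_cases h00 : ((false, false) : Bool × Bool) ∈ U
  · refine Or.inl (SetLike.ext fun x => ?_)
    simp only [UpperSet.mem_bot, iff_true]
    exact up _ x (by rcases x with ⟨a,b⟩; cases a <;> cases b <;> decide) h00
  by_cases h10 : ((true, false) : Bool × Bool) ∈ U
  · by_cases h01 : ((false, true) : Bool × Bool) ∈ U
    · refine Or.inr (Or.inr (Or.inr (Or.inr (Or.inl (SetLike.ext fun x => ?_)))))
      rw [UpperSet.mem_inf_iff, UpperSet.mem_Ici_iff, UpperSet.mem_Ici_iff]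
      rcases x with ⟨a,b⟩
      cases a <;> cases b
      · simp [h00]
      · simp [h01]
      · simp [h10]
      · simpa using up (true,false) (true,true) (by decide) h10
    · refine Or.inr (Or.inl (SetLike.ext fun x => ?_))
      rw [UpperSet.mem_Ici_iff]
      rcases x with ⟨a,b⟩
      cases a <;> cases b
      · simp [h00]
      · simp [h01]
      · simp [h10]
      · simpa using up (true,false) (true,true) (by decide) h10
  · by_cases h01 : ((false, true) : Bool × Bool) ∈ U
    · refine Or.inr (Or.inr (Or.inl (SetLike.ext fun x => ?_)))
      rw [UpperSet.mem_Ici_iff]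
      rcases x with ⟨a,b⟩
      cases a <;> cases b
      · simp [h00]
      · simp [h01]
      · simp [h10]
      · simpa using up (false,true) (true,true) (by decide) h01
    · by_cases h11 : ((true, true) : Bool × Bool) ∈ U
      · refine Or.inr (Or.inr (Or.inr (Or.inl (SetLike.ext fun x => ?_))))
        rw [UpperSet.mem_sup_iff, UpperSet.mem_Ici_iff, UpperSet.mem_Ici_iff]
        rcases x with ⟨a,b⟩
        cases a <;> cases b
        · simp [h00]
        · simp [h01]
        · simp [h10]
        · simp [h11]
      · refine Or.inr (Or.inr (Or.inr (Or.inr (Or.inr (SetLike.ext fun x => ?_)))))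
        exact iff_of_false (by rcases x with ⟨a,b⟩; cases a <;> cases b <;> assumption)
          UpperSet.notMem_top

section Ext2
variable {M : Type} [DistribLattice M] [BoundedOrder M]

open Classical in
/-- The extension of `0 ↦ x, 1 ↦ y` along the generators of `UpperSet (Bool × Bool)`. -/
noncomputable def ext2 (x y : M) : UpperSet (Bool × Bool) → M := fun U =>
  if (false, false) ∈ U then ⊥
  else if (true, false) ∈ U then (if (false, true) ∈ U then x ⊓ y else x)
  else if (false, true) ∈ U then y
  else if (true, true) ∈ U then x ⊔ y
  else ⊤

lemma ext2_bot (x y : M) : ext2 x y ⊥ = ⊥ := by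
  simp [ext2, UpperSet.mem_bot]

lemma ext2_top (x y : M) : ext2 x y ⊤ = ⊤ := by
  simp [ext2, UpperSet.notMem_top]

lemma ext2_A (x y : M) : ext2 x y AA = x := by
  simp (config := { decide := true }) [ext2, UpperSet.mem_Ici_iff]

lemma ext2_B (x y : M) : ext2 x y BB = y := by
  simp (config := { decide := true }) [ext2, UpperSet.mem_Ici_iff]

lemma ext2_map_sup (x y : M) (U V : UpperSet (Bool × Bool)) :
    ext2 x y (U ⊔ V) = ext2 x y U ⊔ ext2 x y V := by
  rcases classify4 U with h|h|h|h|h|h <;> rcases classify4 V with h'|h'|h'|h'|h'|h' <;>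
    subst h h' <;>
    simp (config := { decide := true })
      [ext2, UpperSet.mem_sup_iff, UpperSet.mem_inf_iff, UpperSet.mem_Ici_iff,
       UpperSet.mem_bot, UpperSet.notMem_top] <;>
    first
      | rfl
      | exact inf_le_of_left_le le_sup_left
      | simp [sup_comm, inf_comm, sup_assoc, inf_assoc, sup_left_comm, inf_left_comm]

lemma ext2_map_inf (x y : M) (U V : UpperSet (Bool × Bool)) :
    ext2 x y (U ⊓ V) = ext2 x y U ⊓ ext2 x y V := by
  rcases classify4 U with h|h|h|h|h|h <;> rcases classify4 V with h'|h'|h'|h'|h'|h' <;>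
    subst h h' <;>
    simp (config := { decide := true })
      [ext2, UpperSet.mem_sup_iff, UpperSet.mem_inf_iff, UpperSet.mem_Ici_iff,
       UpperSet.mem_bot, UpperSet.notMem_top] <;>
    first
      | rfl
      | exact inf_le_of_left_le le_sup_left
      | simp [sup_comm, inf_comm, sup_assoc, inf_assoc, sup_left_comm, inf_left_comm]

/-- `ext2` as a bounded lattice homomorphism. -/
noncomputable def ext2Hom (x y : M) : BoundedLatticeHom (UpperSet (Bool × Bool)) M :=
  ⟨⟨⟨ext2 x y, ext2_map_sup x y⟩, ext2_map_inf x y⟩, ext2_top x y, ext2_bot x y⟩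

lemma ext2Hom_apply (x y : M) (U : UpperSet (Bool × Bool)) : ext2Hom x y U = ext2 x y U := rfl

end Ext2

/-- `UpperSet (Bool × Bool)` is free on the two generators. -/
lemma upperSet_square_free :
    IsFreeDistribLattice (UpperSet (Bool × Bool))
      (fun i : Fin 2 => if i = 0 then UpperSet.Ici (true, false)
        else UpperSet.Ici (false, true)) := by
  intro M iM bM f
  refine ⟨ext2Hom (f 0) (f 1), ?_, ?_⟩
  · intro i
    fin_cases i
    · simpa [ext2Hom_apply] using ext2_A (f 0) (f 1)
    · simpa [ext2Hom_apply] using ext2_B (f 0) (f 1)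
  · intro g hg
    have hA : g AA = f 0 := by simpa using hg 0
    have hB : g BB = f 1 := by simpa using hg 1
    ext U
    rcases classify4 U with h|h|h|h|h|h <;> subst h
    · rw [map_bot, map_bot]
    · rw [hA, ext2Hom_apply, ext2_A]
    · rw [hB, ext2Hom_apply, ext2_B]
    · rw [map_sup, map_sup, hA, hB, ext2Hom_apply, ext2Hom_apply, ext2_A, ext2_B]
    · rw [map_inf, map_inf, hA, hB, ext2Hom_apply, ext2Hom_apply, ext2_A, ext2_B]
    · rw [map_top, map_top]

/-- Every bounded lattice homomorphism from the 4-chain to `Bool` is a co-evaluation. -/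
lemma hom_chain_classify (h : BoundedLatticeHom (UpperSet (Fin 3)) Bool) :
    h = coev 0 ∨ h = coev 1 ∨ h = coev 2 := by
  classical
  have hsup : UpperSet.Ici (1 : Fin 3) ⊔ UpperSet.Ici 2 = UpperSet.Ici 2 := by
    refine SetLike.ext fun x => ?_
    simp only [UpperSet.mem_sup_iff, UpperSet.mem_Ici_iff]
    constructor
    · rintro ⟨_, h2⟩; exact h2
    · intro h2; exact ⟨le_trans (by omega) h2, h2⟩
  have hbot : h ⊥ = false := by rw [map_bot]; rfl
  have htop : h ⊤ = true := by rw [map_top]; rfl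
  have key : ∀ k, h (UpperSet.Ici 1) = coev k (UpperSet.Ici 1) →
      h (UpperSet.Ici 2) = coev k (UpperSet.Ici 2) → h = coev k := by
    intro k e1 e2
    ext U
    rcases classify3 U with hU|hU|hU|hU <;> subst hU
    · rw [hbot, map_bot]; rfl
    · exact e1
    · exact e2
    · rw [htop, map_top]; rfl
  by_cases h1 : h (UpperSet.Ici 1) = true <;> by_cases h2 : h (UpperSet.Ici 2) = true
  · exact Or.inl (key 0 (by rw [h1, coev_Ici]; decide) (by rw [h2, coev_Ici]; decide))
  · -- impossible: h (Ici 1) = true, h (Ici 2) = false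
    exfalso
    have key2 : h (UpperSet.Ici (1 : Fin 3)) ⊔ h (UpperSet.Ici 2) = h (UpperSet.Ici 2) := by
      rw [← map_sup, hsup]
    simp only [Bool.not_eq_true] at h2
    rw [h1, h2] at key2
    simp at key2
  · exact Or.inr (Or.inl (key 1
      (by simp only [Bool.not_eq_true] at h1; rw [h1, coev_Ici]; decide)
      (by rw [h2, coev_Ici]; decide)))
  · refine Or.inr (Or.inr (key 2 ?_ ?_)) <;>
      simp only [Bool.not_eq_true] at h1 h2
    · rw [h1, coev_Ici]; decide
    · rw [h2, coev_Ici]; decide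

lemma coev_distinct : coev 0 ≠ coev 1 ∧ coev 0 ≠ coev 2 ∧ coev 1 ≠ coev 2 := by
  refine ⟨fun e => ?_, fun e => ?_, fun e => ?_⟩
  · have := DFunLike.congr_fun e (UpperSet.Ici 1)
    rw [coev_Ici, coev_Ici] at this
    exact absurd this (by decide)
  · have := DFunLike.congr_fun e (UpperSet.Ici 1)
    rw [coev_Ici, coev_Ici] at this
    exact absurd this (by decide)
  · have := DFunLike.congr_fun e (UpperSet.Ici 2)
    rw [coev_Ici, coev_Ici] at this
    exact absurd this (by decide)

/-- The 4-chain is not free on any family of generators. -/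
lemma chain_not_free :
    ¬ ∃ (S : Type) (ι : S → UpperSet (Fin 3)),
        IsFreeDistribLattice (UpperSet (Fin 3)) ι := by
  rintro ⟨S, ι, hfree⟩
  classical
  set F : BoundedLatticeHom (UpperSet (Fin 3)) Bool → (S → Bool) :=
    fun g s => g (ι s) with hF
  have Finj : Function.Injective F := by
    intro g1 g2 e
    obtain ⟨g0, -, huniq⟩ := hfree Bool inferInstance inferInstance (F g1)
    have e1 : g1 = g0 := huniq g1 (fun s => rfl)
    have e2 : g2 = g0 := huniq g2 (fun s => (congrFun e.symm s))
    rw [e1, e2]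
  have Fsurj : ∀ f : S → Bool, ∃ g, F g = f := by
    intro f
    obtain ⟨g, hg, -⟩ := hfree Bool inferInstance inferInstance f
    exact ⟨g, funext hg⟩
  set f0 := F (coev 0); set f1 := F (coev 1); set f2 := F (coev 2)
  have complete : ∀ f : S → Bool, f = f0 ∨ f = f1 ∨ f = f2 := by
    intro f
    obtain ⟨g, hg⟩ := Fsurj f
    rcases hom_chain_classify g with h|h|h
    · exact Or.inl (by rw [← hg, h])
    · exact Or.inr (Or.inl (by rw [← hg, h]))
    · exact Or.inr (Or.inr (by rw [← hg, h]))
  obtain ⟨d01, d02, d12⟩ := coev_distinct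
  have ne01 : f0 ≠ f1 := fun e => d01 (Finj e)
  have ne02 : f0 ≠ f2 := fun e => d02 (Finj e)
  have ne12 : f1 ≠ f2 := fun e => d12 (Finj e)
  -- the pointwise-negation involution has no fixed points, impossible on 3 elements
  set n : (S → Bool) → (S → Bool) := fun f s => !(f s) with hn
  have nn : ∀ f, n (n f) = f := fun f => funext fun s => Bool.not_not _
  obtain ⟨s0, hs0⟩ := Function.ne_iff.mp ne01
  have nofix : ∀ f : S → Bool, n f ≠ f := by
    intro f e
    have := congrFun e s0
    exact (Bool.not_ne_self (f s0)) this
  rcases complete (n f0) with h|h|h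
  · exact nofix f0 h
  · -- n f0 = f1, so n f1 = f0, forcing n f2 = f2
    have h10 : n f1 = f0 := by rw [← h, nn]
    rcases complete (n f2) with h'|h'|h'
    · exact ne12 (by rw [← nn f2, h', h])
    · exact ne02 (by rw [← nn f2, h', h10])
    · exact nofix f2 h'
  · have h20 : n f2 = f0 := by rw [← h, nn]
    rcases complete (n f1) with h'|h'|h'
    · exact ne12 (by rw [← nn f1, h', h])
    · exact nofix f1 h'
    · exact ne01 (by rw [← nn f1, h', h20])

/-- The section `{0<1<2} → {0<1}²`. -/
def sMap : Fin 3 →o Bool × Bool where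
  toFun i := if i = 0 then (false, false) else if i = 1 then (true, false) else (true, true)
  monotone' := by decide

/-- The retraction `{0<1}² → {0<1<2}`. -/
def rMap : Bool × Bool →o Fin 3 where
  toFun p := if p.1 then (if p.2 then 2 else 1) else (if p.2 then 1 else 0)
  monotone' := by decide


/-- the Lawvere theory of distributive lattices is not Cauchy complete:
there is a section–retraction pair `s : {0<1<2} ⇄ {0<1}² : r` of posets which, applying
the contravariant functor `Pos(−, {0<1})` (i.e. taking upper sets), exhibits the
4-element chain `Pos({0<1<2}, {0<1}) = UpperSet (Fin 3)` as a retract of the free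
distributive lattice on two generators `Pos({0<1}², {0<1}) = UpperSet (Bool × Bool)`,
and this 4-element chain is not a free distributive lattice. -/
theorem distribLattice_lawvere_not_cauchy_complete :
    ∃ (s : Fin 3 →o Bool × Bool) (r : Bool × Bool →o Fin 3),
      r.comp s = OrderHom.id ∧
      -- `UpperSet (Bool × Bool)` is the free distributive lattice on two generators
      IsFreeDistribLattice (UpperSet (Bool × Bool))
        (fun i : Fin 2 => if i = 0 then UpperSet.Ici (true, false)
          else UpperSet.Ici (false, true)) ∧
      ∃ (σ : BoundedLatticeHom (UpperSet (Fin 3)) (UpperSet (Bool × Bool)))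
        (ρ : BoundedLatticeHom (UpperSet (Bool × Bool)) (UpperSet (Fin 3))),
        -- σ = Pos(r, {0<1}) and ρ = Pos(s, {0<1})
        (∀ (U : UpperSet (Fin 3)) (x : Bool × Bool), x ∈ σ U ↔ r x ∈ U) ∧
        (∀ (U : UpperSet (Bool × Bool)) (x : Fin 3), x ∈ ρ U ↔ s x ∈ U) ∧
        -- ρ ∘ σ = id, so `UpperSet (Fin 3)` is a retract of `UpperSet (Bool × Bool)`
        (∀ U : UpperSet (Fin 3), ρ (σ U) = U) ∧
        -- but `UpperSet (Fin 3)` is not free on any set of generators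
        ¬ ∃ (S : Type) (ι : S → UpperSet (Fin 3)),
            IsFreeDistribLattice (UpperSet (Fin 3)) ι := by
  refine ⟨sMap, rMap, by ext i; fin_cases i <;> rfl,
    upperSet_square_free,
    UpperSetComapHom _, UpperSetComapHom _,
    fun U x => Iff.rfl, fun U x => Iff.rfl,
    fun U => SetLike.ext fun i => by fin_cases i <;> exact Iff.rfl,
    chain_not_free⟩
end

section
/- Colimit decomposition formula: let ℂ : 𝕁 → Cat be a small diagram of small categories with colimit colim ℂ (in the 1-category Cat), with inclusions σ_j : ℂ_j → colim ℂ, and let D : colim ℂ → 𝔛 be a diagram such that for each j ∈ 𝕁 the colimit colim_{c ∈ ℂ_j} D(σ_j c) exists in 𝔛, and such that the iterated colimit colim_{j ∈ 𝕁} colim_{c ∈ ℂ_j} D(σ_j c) exists. Then this iterated colimit is a colimit of D. -/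
open CategoryTheory CategoryTheory.Limits

universe v u

/-!
Every object of a colimit of small categories lies in the image of some `σ_j`, and compatible
functors `B j ⥤ E` glue to a functor out of the colimit even when `E` is large, because they can
be glued into a small model of their joint image. For `E` the category of costructured arrows
`D ⟶ T`, this says that cocones on `D` with apex `T` are the compatible families of cocones on
the `σ_j ⋙ D` with apex `T`. By the universal property of the inner colimits such a family is a
cocone on the diagram `G` of inner colimits, so a colimit of `G` is a colimit of `D`.
-/

namespace CategoryTheory

universe w u'

section JointImage

variable {ι : Type w} {A : ι → Type w} [∀ i, Category.{w} (A i)]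
  {E : Type u'} [Category.{w} E] (F : ∀ i, A i ⥤ E)

/-- Points of the `A i` with equal images are identified, so that the lifts of strictly
compatible functors remain strictly compatible. -/
def jointImageObj : Quot (fun p q : Σ i, A i => (F p.1).obj p.2 = (F q.1).obj q.2) → E :=
  Quot.lift (fun p => (F p.1).obj p.2) fun _ _ h => h

abbrev JointImage : Type w := InducedCategory E (jointImageObj F)

namespace JointImage

abbrev incl : JointImage F ⥤ E := inducedFunctor (jointImageObj F)

def lift (i : ι) : A i ⥤ JointImage F where
  obj x := Quot.mk _ ⟨i, x⟩
  map g := InducedCategory.homMk ((F i).map g)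

theorem lift_comp_incl (i : ι) : lift F i ⋙ incl F = F i :=
  rfl

theorem exists_incl_obj_eq (y : JointImage F) : ∃ i x, (incl F).obj y = (F i).obj x :=
  Quot.inductionOn y fun p => ⟨p.1, p.2, rfl⟩

theorem lift_obj_eq {i i' : ι} {x : A i} {x' : A i'} (h : (F i).obj x = (F i').obj x') :
    (lift F i).obj x = (lift F i').obj x' :=
  Quot.sound h

theorem comp_lift_eq {i i' : ι} (G : A i ⥤ A i') (h : G ⋙ F i' = F i) :
    G ⋙ lift F i' = lift F i :=
  Functor.ext (fun x => lift_obj_eq F (Functor.congr_obj h x)) fun x y g => by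
    apply (incl F).map_injective
    rw [Functor.map_comp, Functor.map_comp, eqToHom_map, eqToHom_map]
    exact Functor.congr_hom h g

end JointImage

end JointImage

section

variable {J : Type w} [SmallCategory J] {B : J ⥤ Cat.{w, w}} {c : Cocone B} (hc : IsColimit c)
include hc

theorem Limits.IsColimit.exists_functor_comp_eq {E : Type u'} [Category.{w} E]
    (F : ∀ j, B.obj j ⥤ E)
    (hF : ∀ ⦃j j' : J⦄ (t : j ⟶ j'), (B.map t).toFunctor ⋙ F j' = F j) :
    ∃ L : c.pt ⥤ E, (∀ j, (c.ι.app j).toFunctor ⋙ L = F j) ∧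
      ∀ X, ∃ j x, L.obj X = (F j).obj x := by
  let s : Cocone B :=
    { pt := Cat.of (JointImage F)
      ι := { app j := (JointImage.lift F j).toCatHom
             naturality _ _ t := Cat.ext (JointImage.comp_lift_eq F _ (hF t)) } }
  refine ⟨(hc.desc s).toFunctor ⋙ JointImage.incl F, fun j => ?_,
    fun X => JointImage.exists_incl_obj_eq F _⟩
  exact (congrArg (· ⋙ JointImage.incl F) (congrArg Cat.Hom.toFunctor (hc.fac s j))).trans
    (JointImage.lift_comp_incl F j)

theorem Limits.IsColimit.exists_ι_obj_eq (X : c.pt) :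
    ∃ j x, (c.ι.app j).toFunctor.obj x = X := by
  obtain ⟨L, hL, hLobj⟩ := hc.exists_functor_comp_eq (E := c.pt)
    (fun j => show B.obj j ⥤ c.pt from (c.ι.app j).toFunctor)
    fun _ _ t => congrArg Cat.Hom.toFunctor (c.w t)
  have hL_id : L = 𝟭 c.pt := congrArg Cat.Hom.toFunctor
    (hc.hom_ext (f := L.toCatHom) (f' := 𝟙 c.pt) fun j => Cat.ext (hL j))
  obtain ⟨j, x, hx⟩ := hLobj X
  exact ⟨j, x, by rw [← hx, hL_id]; rfl⟩

end

section

variable {C : Type u'} [Category.{w} C] {X : Type u} [Category.{v} X] {D : C ⥤ X} {T : X}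

def CostructuredArrow.natTransOfSection (L : C ⥤ CostructuredArrow D T)
    (hL : L ⋙ CostructuredArrow.proj D T = 𝟭 C) : D ⟶ (Functor.const C).obj T where
  app Y := D.map (eqToHom (show Y = (L.obj Y).left from (Functor.congr_obj hL Y).symm)) ≫
    (L.obj Y).hom
  naturality Y Z f := by
    have hobj (Y : C) : (L.obj Y).left = Y := Functor.congr_obj hL Y
    have hf : (L.map f).left = eqToHom (hobj Y) ≫ f ≫ eqToHom (hobj Z).symm :=
      Functor.congr_hom hL f
    dsimp
    rw [Category.comp_id, ← CostructuredArrow.w (L.map f), hf]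
    simp [eqToHom_map]

theorem CostructuredArrow.natTransOfSection_app {L : C ⥤ CostructuredArrow D T}
    (hL : L ⋙ CostructuredArrow.proj D T = 𝟭 C) {Y : C} {f : D.obj Y ⟶ T}
    (hY : L.obj Y = CostructuredArrow.mk f) : (natTransOfSection L hL).app Y = f := by
  suffices ∀ (Z : CostructuredArrow D T) (p : Y = Z.left), Z = mk f →
      D.map (eqToHom p) ≫ Z.hom = f from this _ _ hY
  rintro Z p rfl
  simp

end

section

variable {J : Type w} [SmallCategory J] {B : J ⥤ Cat.{w, w}} {c : Cocone B} (hc : IsColimit c)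
  {X : Type u} [Category.{v} X]
include hc

theorem Limits.IsColimit.exists_natTrans_whiskerLeft_eq (D : c.pt ⥤ X) (T : X)
    (ℓ : ∀ j, (c.ι.app j).toFunctor ⋙ D ⟶ (Functor.const _).obj T)
    (hℓ : ∀ ⦃j j' : J⦄ (t : j ⟶ j') (x : B.obj j),
      (CostructuredArrow.mk ((ℓ j).app x) : CostructuredArrow D T) =
        (CostructuredArrow.mk ((ℓ j').app ((B.map t).toFunctor.obj x)) :
          CostructuredArrow D T)) :
    ∃ α : D ⟶ (Functor.const _).obj T,
      ∀ j, Functor.whiskerLeft (c.ι.app j).toFunctor α = ℓ j := by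
  let Φ (j : J) : B.obj j ⥤ CostructuredArrow D T :=
    (c.ι.app j).toFunctor.toCostructuredArrow D T (ℓ j).app fun g => by
      simpa using (ℓ j).naturality g
  have hΦ ⦃j j' : J⦄ (t : j ⟶ j') : (B.map t).toFunctor ⋙ Φ j' = Φ j :=
    Functor.ext (fun x => show ((B.map t).toFunctor ⋙ Φ j').obj x = (Φ j).obj x from
      (hℓ t x).symm) fun x y g => by
      apply (CostructuredArrow.proj D T).map_injective
      rw [Functor.map_comp, Functor.map_comp, eqToHom_map, eqToHom_map]
      exact Functor.congr_hom (congrArg Cat.Hom.toFunctor (c.w t)) g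
  obtain ⟨L, hL, -⟩ := hc.exists_functor_comp_eq Φ hΦ
  have hsection : L ⋙ CostructuredArrow.proj D T = 𝟭 c.pt := congrArg Cat.Hom.toFunctor
    (hc.hom_ext (f := (L ⋙ CostructuredArrow.proj D T).toCatHom) (f' := 𝟙 c.pt)
      fun j => Cat.ext <| show (c.ι.app j).toFunctor ⋙ L ⋙ CostructuredArrow.proj D T = _ by
        rw [← Functor.assoc, hL j]; rfl)
  refine ⟨CostructuredArrow.natTransOfSection L hsection, fun j => ?_⟩
  ext x
  exact CostructuredArrow.natTransOfSection_app hsection (Functor.congr_obj (hL j) x)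

end

theorem CostructuredArrow.mk_eq_mk {C : Type*} [Category C] {X : Type*} [Category X]
    {S : C ⥤ X} {T : X} {Y Y' : C} (h : Y = Y') {f : S.obj Y ⟶ T} {f' : S.obj Y' ⟶ T}
    (hf : f = S.map (eqToHom h) ≫ f') : mk f = mk f' := by
  subst h
  rw [hf, eqToHom_refl, S.map_id, Category.id_comp]

theorem Cat.ι_app_obj_map_obj {J : Type*} [Category J] {B : J ⥤ Cat.{w, w}} (c : Cocone B)
    {j j' : J} (t : j ⟶ j') (x : B.obj j) :
    (c.ι.app j').toFunctor.obj ((B.map t).toFunctor.obj x) = (c.ι.app j).toFunctor.obj x :=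
  Functor.congr_obj (congrArg Cat.Hom.toFunctor (c.w t)) x

namespace ColimitDecomposition

variable {J : Type w} [SmallCategory J] {B : J ⥤ Cat.{w, w}} {c : Cocone B}
  {X : Type u} [Category.{v} X] {D : c.pt ⥤ X}
  {cc : ∀ j, Cocone ((c.ι.app j).toFunctor ⋙ D)} {G : J ⥤ X}
  (hobj : ∀ j, G.obj j = (cc j).pt)
  (hcomp : ∀ {j j' : J} (t : j ⟶ j') (x : B.obj j),
      (cc j).ι.app x ≫ eqToHom (hobj j).symm ≫ G.map t ≫ eqToHom (hobj j') =
        eqToHom (by rw [← c.w t]; rfl) ≫ (cc j').ι.app ((B.map t).toFunctor.obj x))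

include hcomp in
theorem ι_app_comp_map_comp {j j' : J} (t : j ⟶ j') (x : B.obj j) {W : X}
    (f : G.obj j' ⟶ W) :
    (cc j).ι.app x ≫ eqToHom (hobj j).symm ≫ G.map t ≫ f =
      D.map (eqToHom (Cat.ι_app_obj_map_obj c t x).symm) ≫
        (cc j').ι.app ((B.map t).toFunctor.obj x) ≫ eqToHom (hobj j').symm ≫ f := by
  have h := hcomp t x =≫ (eqToHom (hobj j').symm ≫ f)
  simp only [Category.assoc, eqToHom_trans_assoc, eqToHom_refl, Category.id_comp] at h
  rw [h, eqToHom_map]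

include hcomp in
theorem mk_extend_ι_app_eq (g : Cocone G) ⦃j j' : J⦄ (t : j ⟶ j') (x : B.obj j) :
    (CostructuredArrow.mk (((cc j).extend (eqToHom (hobj j).symm ≫ g.ι.app j)).ι.app x) :
      CostructuredArrow D g.pt) =
    (CostructuredArrow.mk (((cc j').extend (eqToHom (hobj j').symm ≫ g.ι.app j')).ι.app
      ((B.map t).toFunctor.obj x)) : CostructuredArrow D g.pt) := by
  refine CostructuredArrow.mk_eq_mk (Cat.ι_app_obj_map_obj c t x).symm ?_
  have h := ι_app_comp_map_comp hobj hcomp t x (g.ι.app j')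
  rw [g.w t] at h
  simpa only [Cocone.extend_ι, NatTrans.comp_app, Functor.const_map_app, Category.assoc] using h

def coconeOfCocone (hcc : ∀ j, IsColimit (cc j)) (s : Cocone D) : Cocone G where
  pt := s.pt
  ι.app j := eqToHom (hobj j) ≫ (hcc j).desc (s.whisker (c.ι.app j).toFunctor)
  ι.naturality j j' t := by
    dsimp
    rw [Category.comp_id, ← cancel_epi (eqToHom (hobj j).symm)]
    refine (hcc j).hom_ext fun x => ?_
    simp [ι_app_comp_map_comp hobj hcomp]

variable (hc : IsColimit c) (hcc : ∀ j, IsColimit (cc j)) {g : Cocone G} (hg : IsColimit g)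
  {α : D ⟶ (Functor.const c.pt).obj g.pt}
  (hα : ∀ j, Functor.whiskerLeft (c.ι.app j).toFunctor α =
    ((cc j).extend (eqToHom (hobj j).symm ≫ g.ι.app j)).ι)

include hα in
theorem app_ι_obj (j : J) (x : B.obj j) :
    α.app ((c.ι.app j).toFunctor.obj x) =
      (cc j).ι.app x ≫ eqToHom (hobj j).symm ≫ g.ι.app j :=
  NatTrans.congr_app (hα j) x

include hc hα in
theorem app_comp_desc (s : Cocone D) (Y : c.pt) :
    α.app Y ≫ hg.desc (coconeOfCocone hobj hcomp hcc s) = s.ι.app Y := by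
  obtain ⟨j, x, rfl⟩ := hc.exists_ι_obj_eq Y
  rw [app_ι_obj hobj hα, Category.assoc, Category.assoc, hg.fac]
  simp [coconeOfCocone, (hcc j).fac]

include hcc hg hα in
theorem hom_ext {W : X} {f f' : g.pt ⟶ W}
    (h : ∀ Y, α.app Y ≫ f = α.app Y ≫ f') : f = f' := by
  refine hg.hom_ext fun j => ?_
  rw [← cancel_epi (eqToHom (hobj j).symm)]
  refine (hcc j).hom_ext fun x => ?_
  simpa only [app_ι_obj hobj hα, Category.assoc] using h ((c.ι.app j).toFunctor.obj x)

def isColimit : IsColimit (Cocone.mk g.pt α) where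
  desc s := hg.desc (coconeOfCocone hobj hcomp hcc s)
  fac := app_comp_desc hobj hcomp hc hcc hg hα
  uniq s _ hm := hom_ext hobj hcc hg hα fun Y =>
    (hm Y).trans (app_comp_desc hobj hcomp hc hcc hg hα s Y).symm

end ColimitDecomposition

end CategoryTheory

/-- colimit decomposition formula: let `B : 𝕁 ⥤ Cat` be a small diagram
of small categories with colimit cocone `c` (in the 1-category `Cat`), with inclusions
`σ_j = c.ι.app j : B_j ⟶ colim B`, and let `D : colim B ⥤ 𝔛` be a diagram such that for
each `j` the colimit `colim_{x ∈ B_j} D(σ_j x)` exists (witnessed by a colimiting cocone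
`cc j`), and such that the iterated colimit exists, i.e. the induced diagram
`G : 𝕁 ⥤ 𝔛` with `G.obj j = (cc j).pt` (whose action on arrows is the one induced by
the universal properties of the inner colimits, as expressed by `hcomp`) has a colimit.
Then the iterated colimit `colimit G` is a colimit of `D`. -/
theorem colimit_decomposition_formula
    {𝕁 : Type} [SmallCategory 𝕁] (B : 𝕁 ⥤ Cat.{0, 0})
    (c : Cocone B) (hc : IsColimit c)
    {𝔛 : Type u} [Category.{v} 𝔛] (D : ↑c.pt ⥤ 𝔛)
    (cc : ∀ j : 𝕁, Cocone (((c.ι.app j).toFunctor : ↑(B.obj j) ⥤ ↑c.pt) ⋙ D))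
    (hcc : ∀ j : 𝕁, Nonempty (IsColimit (cc j)))
    (G : 𝕁 ⥤ 𝔛) (hobj : ∀ j : 𝕁, G.obj j = (cc j).pt)
    (hcomp : ∀ {j j' : 𝕁} (t : j ⟶ j') (x : ↑(B.obj j)),
      (cc j).ι.app x ≫ eqToHom (hobj j).symm ≫ G.map t ≫ eqToHom (hobj j') =
        eqToHom (by rw [← c.w t]; rfl) ≫ (cc j').ι.app ((B.map t).toFunctor.obj x))
    [HasColimit G] :
    ∃ d : Cocone D, Nonempty (IsColimit d) ∧ d.pt = colimit G := by
  let g := colimit.cocone G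
  obtain ⟨α, hα⟩ := hc.exists_natTrans_whiskerLeft_eq D g.pt
    (fun j => ((cc j).extend (eqToHom (hobj j).symm ≫ g.ι.app j)).ι)
    (ColimitDecomposition.mk_extend_ι_app_eq hobj hcomp g)
  exact ⟨Cocone.mk g.pt α, ⟨ColimitDecomposition.isColimit hobj hcomp hc
    (fun j => (hcc j).some) (colimit.isColimit G) hα⟩, rfl⟩
end
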